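/- arXiv:1312.5269 — 8 statements merged into one kernel-verified Lean document; each statement's English description precedes it below -/
import Mathlib

section
/- Let G be a nontrivial subgroup of the group 𝕂 of complex numbers of modulus 1, and let n ≥ 2 be an integer. Then G is n-divisible and contains a primitive n-th root of 1 if and only if for every θ ∈ [0,π], e^{iθ} ∈ G implies e^{iθ/n} ∈ G. -/
open Real

private lemma circle_exp_nat_mul (m : ℕ) (x : ℝ) :
    Circle.exp (m * x) = Circle.exp x ^ m := by
  induction m with
  | zero => simp [Circle.exp_zero]
  | succ k ih =>
      push_cast
      rw [add_mul, one_mul, Circle.exp_add, ih, pow_succ]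

private lemma isPrimitiveRoot_circle_exp (n : ℕ) (hn : n ≠ 0) :
    IsPrimitiveRoot (Circle.exp (2 * π / n)) n := by
  have h := Complex.isPrimitiveRoot_exp n hn
  have hmap : (Circle.coeHom) (Circle.exp (2 * π / n)) =
      Complex.exp (2 * π * Complex.I / n) := by
    show ((Circle.exp (2 * π / n) : ℂ)) = _
    rw [Circle.coe_exp]
    congr 1
    push_cast
    ring
  exact IsPrimitiveRoot.of_map_of_injective (f := Circle.coeHom)
    (by rw [hmap]; exact h) Circle.coe_injective

/-- A nontrivial subgroup `G` of the circle group `𝕂` is `n`-divisible and contains a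
primitive `n`-th root of `1` if and only if, for every `θ ∈ [0, π]` with
`e^{iθ} ∈ G`, also `e^{iθ/n} ∈ G`. -/
theorem subgroup_circle_ndivisible_iff (G : Subgroup Circle) (hG : G ≠ ⊥)
    (n : ℕ) (hn : 2 ≤ n) :
    ((∀ x ∈ G, ∃ y ∈ G, y ^ n = x) ∧ (∃ x : Circle, x ∈ G ∧ orderOf x = n)) ↔
      (∀ θ : ℝ, 0 ≤ θ → θ ≤ Real.pi → Circle.exp θ ∈ G → Circle.exp (θ / n) ∈ G) := by
  have hn0 : n ≠ 0 := by omega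
  have hnR : (n : ℝ) ≠ 0 := by exact_mod_cast hn0
  haveI : NeZero n := ⟨hn0⟩
  have hexp_pow : ∀ (θ : ℝ), (Circle.exp (θ / n)) ^ n = Circle.exp θ := by
    intro θ
    rw [← circle_exp_nat_mul, mul_div_cancel₀ _ hnR]
  constructor
  · rintro ⟨hdiv, ζ, hζG, hζord⟩ θ hθ0 hθπ hθG
    obtain ⟨y, hyG, hyn⟩ := hdiv _ hθG
    -- the ratio r is an n-th root of unity
    set r : Circle := Circle.exp (θ / n) * y⁻¹ with hr_def
    have hrn : r ^ n = 1 := by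
      rw [hr_def, mul_pow, hexp_pow, inv_pow, hyn, mul_inv_cancel]
    have hζprim : IsPrimitiveRoot ζ n := hζord ▸ IsPrimitiveRoot.orderOf ζ
    have hζprimC : IsPrimitiveRoot ((Circle.coeHom) ζ) n :=
      hζprim.map_of_injective Circle.coe_injective
    have hrnC : ((Circle.coeHom) r) ^ n = 1 := by
      rw [← map_pow, hrn, map_one]
    obtain ⟨i, _, hi⟩ := hζprimC.eq_pow_of_pow_eq_one hrnC
    have hr_eq : ζ ^ i = r := Circle.coe_injective (by rw [← map_pow] at hi; exact hi)
    have hrG : r ∈ G := hr_eq ▸ G.pow_mem hζG i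
    have : Circle.exp (θ / n) = r * y := by
      rw [hr_def, inv_mul_cancel_right]
    rw [this]
    exact G.mul_mem hrG hyG
  · intro H
    -- Step A: find θ₀ ∈ (0, π] with exp θ₀ ∈ G
    obtain ⟨x, hx1⟩ := Subgroup.ne_bot_iff_exists_ne_one.mp hG
    obtain ⟨θ₀, hθ₀pos, hθ₀le, hθ₀G⟩ :
        ∃ θ₀ : ℝ, 0 < θ₀ ∧ θ₀ ≤ π ∧ Circle.exp θ₀ ∈ G := by
      set a := Complex.arg (x : Circle) with ha_def
      have hax : Circle.exp a = (x : Circle) := Circle.exp_arg _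
      have ha1 : -π < a := Complex.neg_pi_lt_arg _
      have ha2 : a ≤ π := Complex.arg_le_pi _
      rcases lt_trichotomy a 0 with h | h | h
      · refine ⟨-a, by linarith, by linarith, ?_⟩
        rw [Circle.exp_neg, hax]
        exact G.inv_mem x.2
      · exact absurd (Subtype.ext (show ((x : Circle)) = ((1 : ↥G) : Circle) by
          rw [← hax, h, Circle.exp_zero]; rfl)) hx1
      · exact ⟨a, h, ha2, hax ▸ x.2⟩
    -- Step B: exp (2π/n) ∈ G
    have hπpos := Real.pi_pos
    set m : ℕ := ⌈2 * π / θ₀⌉₊ with hm_def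
    have hm1 : 2 * π ≤ m * θ₀ := by
      rw [← div_le_iff₀ hθ₀pos]  -- 2π/θ₀ ≤ m... careful direction
      exact Nat.le_ceil _
    have hm2 : (m : ℝ) * θ₀ < 2 * π + θ₀ := by
      have : (m : ℝ) < 2 * π / θ₀ + 1 :=
        Nat.ceil_lt_add_one (by positivity)
      calc (m : ℝ) * θ₀ < (2 * π / θ₀ + 1) * θ₀ := by
            exact mul_lt_mul_of_pos_right this hθ₀pos
        _ = 2 * π + θ₀ := by field_simp
    set α : ℝ := m * θ₀ - 2 * π with hα_def
    have hα0 : 0 ≤ α := by simp [hα_def]; linarith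
    have hαπ : α ≤ π := by simp [hα_def]; nlinarith
    have hαG : Circle.exp α ∈ G := by
      rw [hα_def, show (m : ℝ) * θ₀ - 2 * π = m * θ₀ - 2 * π from rfl,
        Circle.exp_sub_two_pi, circle_exp_nat_mul]
      exact G.pow_mem hθ₀G m
    have h1 : Circle.exp (α / n) ∈ G := H α hα0 hαπ hαG
    have h2 : Circle.exp ((m : ℝ) * θ₀ / n) ∈ G := by
      have := H θ₀ hθ₀pos.le hθ₀le hθ₀G
      have h3 := G.pow_mem this m
      rwa [← circle_exp_nat_mul, ← mul_div_assoc] at h3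
    have hζG : Circle.exp (2 * π / n) ∈ G := by
      have h4 : Circle.exp ((m : ℝ) * θ₀ / n) / Circle.exp (α / n) ∈ G :=
        G.div_mem h2 h1
      rwa [← Circle.exp_sub, show (m : ℝ) * θ₀ / n - α / n = 2 * π / n by
        rw [hα_def]; ring] at h4
    have hζord : orderOf (Circle.exp (2 * π / n)) = n :=
      ((isPrimitiveRoot_circle_exp n hn0).eq_orderOf).symm
    refine ⟨?_, Circle.exp (2 * π / n), hζG, hζord⟩
    -- divisibility
    intro z hz
    set a := Complex.arg (z : ℂ) with ha_def
    have hax : Circle.exp a = z := Circle.exp_arg _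
    have ha1 : -π < a := Complex.neg_pi_lt_arg _
    have ha2 : a ≤ π := Complex.arg_le_pi _
    rcases le_or_gt 0 a with h | h
    · refine ⟨Circle.exp (a / n), H a h ha2 (hax ▸ hz), ?_⟩
      rw [hexp_pow, hax]
    · have hnegG : Circle.exp (-a) ∈ G := by
        rw [Circle.exp_neg, hax]
        exact G.inv_mem hz
      have h5 := H (-a) (by linarith) (by linarith) hnegG
      refine ⟨(Circle.exp (-a / n))⁻¹, G.inv_mem h5, ?_⟩
      rw [inv_pow, hexp_pow, ← Circle.exp_neg, neg_neg, hax]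
end

section
/- Let (G,R) be a cyclically ordered abelian group and n ≥ 2 an integer. If G is n-regular, then the linear part l(G), equipped with its induced linear order, is an n-regular linearly ordered abelian group. In particular, if G is regular then l(G) is regular. -/
/-!
A nonzero `x` lies in `l(G)` exactly when its multiples `x, 2x, 3x, …` move forward around the
circle without ever passing `0`. Such elements, and everything between `0` and them, lie in the
half `0 < y < -y`, where the linear order of `l(G)` agrees with the cyclic order read from `0`.
So for `x₀ < ⋯ < x_{n-1}` in `l(G)` with `x₀ ≠ 0` the tuple `0, x₀, …, x_{n-1}, -x_{n-1}` is
cyclically ordered, and `n`-regularity of `G` yields `g` with `n • g` between `x₀` and `x_{n-1}`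
and `0 < g < x_{n-1}`; the latter puts `g` in `l(G)`. If `x₀ = 0`, take `g = 0`.
-/

section CyclicOrder

variable {G : Type*}

/-- A compatible cyclic order on an abelian group. -/
structure IsCyclicOrder [AddCommGroup G] (R : G → G → G → Prop) : Prop where
  strict : ∀ a b c : G, R a b c → a ≠ b ∧ b ≠ c ∧ c ≠ a
  cyc : ∀ a b c : G, R a b c → R b c a
  asymm : ∀ a b c : G, R a b c → ¬ R a c b
  trans' : ∀ a b c d : G, R a b c → R a c d → R a b d
  total : ∀ a b c : G, a ≠ b → b ≠ c → c ≠ a → R a b c ∨ R a c b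
  compat : ∀ a b c d : G, R a b c → R (a + d) (b + d) (c + d)

/-- `RChain R m y` expresses `R (y 0, y 1, …, y (m-1))`, i.e.
`R (y i) (y (i+1)) (y (m-1))` for all `i ≤ m - 3`. -/
def RChain (R : G → G → G → Prop) (m : ℕ) (y : ℕ → G) : Prop :=
  ∀ i : ℕ, i + 3 ≤ m → R (y i) (y (i + 1)) (y (m - 1))

/-- `G` is `n`-regular. -/
def NRegularC [AddCommGroup G] (R : G → G → G → Prop) (n : ℕ) : Prop :=
  ∀ x : ℕ → G,
    RChain R (n + 2) (fun i => if i = 0 then 0 else if i = n + 1 then -(x n) else x i) →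
    ∃ g : G, (R (x 1) (n • g) (x n) ∨ n • g = x 1 ∨ n • g = x n) ∧
      RChain R (n + 1) (fun i => if i = n then x n else i • g)

/-- `G` is c-`n`-regular. -/
def CNRegular [AddCommGroup G] (R : G → G → G → Prop) (n : ℕ) : Prop :=
  ∀ x : ℕ → G,
    RChain R (n + 1) (fun i => if i = 0 then 0 else x i) →
    ∃ g : G, (n • g = x 1 ∨ n • g = x n ∨ R (x 1) (n • g) (x n)) ∧
      RChain R (n + 1) (fun i => if i = n then x n else i • g)

open Classical in
/-- Addition on the unwound `ℤ × G` of `(G, R)`. -/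
noncomputable def uwAdd [AddCommGroup G] (R : G → G → G → Prop) (p q : ℤ × G) : ℤ × G :=
  if p.2 = 0 ∨ q.2 = 0 ∨ R 0 p.2 (p.2 + q.2) then (p.1 + q.1, p.2 + q.2)
  else (p.1 + q.1 + 1, p.2 + q.2)

open Classical in
/-- Negation on the unwound. -/
noncomputable def uwNeg [AddCommGroup G] (p : ℤ × G) : ℤ × G :=
  if p.2 = 0 then (-p.1, 0) else (-p.1 - 1, -p.2)

/-- The order on the unwound. -/
def uwLt [AddCommGroup G] (R : G → G → G → Prop) (p q : ℤ × G) : Prop :=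
  p.1 < q.1 ∨ (p.1 = q.1 ∧ R 0 p.2 q.2) ∨ (p.1 = q.1 ∧ p.2 = 0 ∧ q.2 ≠ 0)

/-- Natural scalar multiplication on the unwound. -/
noncomputable def uwNsmul [AddCommGroup G] (R : G → G → G → Prop) : ℕ → ℤ × G → ℤ × G
  | 0, _ => (0, 0)
  | n + 1, x => uwAdd R (uwNsmul R n x) x

open Classical in
/-- Integer scalar multiplication on the unwound. -/
noncomputable def uwZsmul [AddCommGroup G] (R : G → G → G → Prop) (n : ℤ) (x : ℤ × G) :
    ℤ × G :=
  if 0 ≤ n then uwNsmul R n.toNat x else uwNeg (uwNsmul R (-n).toNat x)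

/-- The linear part `l(G)` of `(G, R)`. -/
def lpart [AddCommGroup G] (R : G → G → G → Prop) : Set G :=
  {x : G | ∀ n : ℤ, uwLt R (uwZsmul R n ((0 : ℤ), x)) ((1 : ℤ), (0 : G))}

/-- The linear order on the linear part: `x < y` iff `R 0 (y - x) (-(y-x))`. -/
def lLt [AddCommGroup G] (R : G → G → G → Prop) (x y : G) : Prop :=
  R 0 (y - x) (x - y)

/-- `l(G)` is an `n`-regular linearly ordered group. -/
def lpartNRegular [AddCommGroup G] (R : G → G → G → Prop) (n : ℕ) : Prop :=
  ∀ x : ℕ → G, (∀ i : ℕ, i < n → x i ∈ lpart R) →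
    (∀ i : ℕ, i + 1 < n → lLt R (x i) (x (i + 1))) →
    ∃ g ∈ lpart R, (lLt R (x 0) (n • g) ∨ x 0 = n • g) ∧
      (lLt R (n • g) (x (n - 1)) ∨ n • g = x (n - 1))

/-- The unwound is an `n`-regular linearly ordered group. -/
def uwNRegular [AddCommGroup G] (R : G → G → G → Prop) (n : ℕ) : Prop :=
  ∀ x : ℕ → ℤ × G, (∀ i : ℕ, i + 1 < n → uwLt R (x i) (x (i + 1))) →
    ∃ g : ℤ × G, (uwLt R (x 0) (uwNsmul R n g) ∨ x 0 = uwNsmul R n g) ∧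
      (uwLt R (uwNsmul R n g) (x (n - 1)) ∨ uwNsmul R n g = x (n - 1))

/-- `K(G) = G/l(G)` contains a primitive `n`-th root of `1`,
i.e. an element of order exactly `n`. -/
def KPrimitiveRoot [AddCommGroup G] (R : G → G → G → Prop) (n : ℕ) : Prop :=
  ∃ x : G, n • x ∈ lpart R ∧ ∀ k : ℕ, 0 < k → k < n → k • x ∉ lpart R

/-- `K(G) = G/l(G)` is `n`-divisible. -/
def KDivisibleBy [AddCommGroup G] (R : G → G → G → Prop) (n : ℕ) : Prop :=
  ∀ x : G, ∃ y : G, x - n • y ∈ lpart R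

end CyclicOrder

section

variable {G : Type*} [AddCommGroup G] {R : G → G → G → Prop}

def IsCycPos (R : G → G → G → Prop) (x : G) : Prop := R 0 x (-x)

def IsInfinitesimal (R : G → G → G → Prop) (x : G) : Prop :=
  ∀ k : ℕ, R 0 ((k + 1) • x) ((k + 2) • x)

theorem lLt_iff_isCycPos_sub {a b : G} : lLt R a b ↔ IsCycPos R (b - a) := by
  rw [lLt, IsCycPos, neg_sub]

namespace IsCyclicOrder

variable {a b c d p q u v w x y z : G}

theorem cyc' (h : IsCyclicOrder R) (hr : R a b c) : R c a b :=
  h.cyc _ _ _ (h.cyc _ _ _ hr)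

theorem rel_of_rel_of_rel (h : IsCyclicOrder R) (hab : R d a b) (hbc : R d b c) : R a b c :=
  h.cyc' (h.trans' b c d a (h.cyc _ _ _ hbc) (h.cyc' hab))

theorem rel_and_rel_of_rel (h : IsCyclicOrder R) (hac : R d a c) (habc : R a b c) :
    R d a b ∧ R d b c :=
  ⟨h.rel_of_rel_of_rel (h.cyc' hac) (h.cyc' habc),
    h.cyc _ _ _ (h.trans' c d a b (h.cyc' hac) (h.cyc' habc))⟩

theorem rel_of_rel_of_rel_of_rel (h : IsCyclicOrder R) (huv : R d u v) (huw : R d u w)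
    (huvw : R u v w) : R d v w := by
  obtain ⟨-, -, hvd⟩ := h.strict _ _ _ huv
  obtain ⟨-, hvw, -⟩ := h.strict _ _ _ huvw
  obtain ⟨-, -, hwd⟩ := h.strict _ _ _ huw
  refine (h.total d v w hvd.symm hvw hwd).resolve_right fun hwv => ?_
  exact h.asymm _ _ _ huvw (h.rel_of_rel_of_rel huw hwv)

theorem not_rel_add_left (h : IsCyclicOrder R) (hx : R 0 x (x + y)) : ¬ R 0 (x + y) y := by
  intro hy
  have c1 : R 0 (-y) x := h.cyc' (by convert h.compat 0 (x + y) y (-y) hy using 1 <;> abel)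
  have c2 : R 0 y (-x) := h.cyc _ _ _ (by convert h.compat 0 x (x + y) (-x) hx using 1 <;> abel)
  have c3 : R 0 (-x) (-(x + y)) :=
    h.cyc _ _ _ (by convert h.compat 0 (x + y) y (-(x + y)) hy using 1 <;> abel)
  have c4 : R 0 (-(x + y)) (-y) :=
    h.cyc' (by convert h.compat 0 x (x + y) (-(x + y)) hx using 1 <;> abel)
  have hy' : R 0 y (-y) := h.trans' _ _ _ _ (h.trans' _ _ _ _ c2 c3) c4
  exact h.asymm _ _ _ (h.trans' _ _ _ _ (h.trans' _ _ _ _ hx hy) hy') c1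

theorem rel_add_of_isCycPos (h : IsCyclicOrder R) (hp : IsCycPos R p) (hq : IsCycPos R q) :
    R 0 p (p + q) := by
  obtain ⟨hp0, -, -⟩ := h.strict _ _ _ hp
  obtain ⟨hq0, -, -⟩ := h.strict _ _ _ hq
  have hpq0 : p + q ≠ 0 := fun he => by
    rw [IsCycPos, eq_neg_of_add_eq_zero_right he, neg_neg] at hq
    exact h.asymm _ _ _ hp hq
  have hneg_lt {a b : G} (hab : R 0 (a + b) a) : R 0 (-a) b :=
    h.cyc' (by convert h.compat 0 (a + b) a (-a) hab using 1 <;> abel)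
  refine (h.total 0 p (p + q) hp0 (by simpa using hq0.symm) hpq0).resolve_right fun hqp => ?_
  rcases h.total 0 q (p + q) hq0 (by simpa using hp0.symm) hpq0 with hpq | hpq
  · exact h.not_rel_add_left (by rwa [add_comm]) (by rwa [add_comm q p])
  · have hp' : R 0 (-p) p :=
      h.trans' _ _ _ _ (h.trans' _ _ _ _ (hneg_lt hqp) hq) (hneg_lt (by rwa [add_comm] at hpq))
    exact h.asymm _ _ _ hp hp'

theorem rel_neg_of_isCycPos (h : IsCyclicOrder R) (hp : IsCycPos R p) (hq : IsCycPos R q) :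
    R 0 p (-q) := by
  obtain ⟨hp0, -, -⟩ := h.strict _ _ _ hp
  obtain ⟨hq0, -, -⟩ := h.strict _ _ _ hq
  have hpq : p ≠ -q := fun he => by
    rw [IsCycPos, he, neg_neg] at hp
    exact h.asymm _ _ _ hq hp
  refine (h.total 0 p (-q) hp0 hpq (neg_ne_zero.mpr hq0.symm)).resolve_right fun hqp => ?_
  have hpq' : R 0 (p + q) q := h.cyc _ _ _ (by convert h.compat 0 (-q) p q hqp using 1 <;> abel)
  exact h.asymm _ _ _ (add_comm q p ▸ h.rel_add_of_isCycPos hq hp) hpq'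

theorem rel_add_add (h : IsCyclicOrder R) (ha : IsCycPos R a) (hu : IsCycPos R u)
    (hv : IsCycPos R v) (huv : R 0 u v) : R 0 (a + u) (a + v) :=
  h.rel_of_rel_of_rel_of_rel (h.rel_add_of_isCycPos ha hu) (h.rel_add_of_isCycPos ha hv)
    (by convert h.compat 0 u v a huv using 1 <;> abel)

theorem isCycPos_of_rel (h : IsCyclicOrder R) (hza : R 0 z a) (ha : IsCycPos R a) :
    IsCycPos R z := by
  obtain ⟨hz0, -, -⟩ := h.strict _ _ _ hza
  by_cases hzz : z = -z
  · have hza' := h.compat 0 z a z hza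
    rw [zero_add, show z + z = 0 by nth_rw 2 [hzz]; exact add_neg_cancel z] at hza'
    have haz : R 0 (a + z) a := h.trans' _ _ z _ (h.cyc _ _ _ hza') hza
    have ha2 : R a 0 (a + a) := by
      refine h.trans' _ _ (a + z) _ (h.cyc' haz) ?_
      convert h.compat 0 z a a hza using 1 <;> abel
    exact absurd (h.cyc _ _ _ ha2) (h.asymm _ _ _ (h.rel_add_of_isCycPos ha ha))
  · refine (h.total 0 z (-z) hz0 hzz (neg_ne_zero.mpr hz0.symm)).resolve_right fun hz => ?_
    have haz := h.rel_neg_of_isCycPos ha (show IsCycPos R (-z) by rwa [IsCycPos, neg_neg])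
    rw [neg_neg] at haz
    exact h.asymm _ _ _ hza haz

theorem isCycPos_sub (h : IsCyclicOrder R) (hu : IsCycPos R u) (hv : IsCycPos R v)
    (huv : R 0 u v) : IsCycPos R (v - u) := by
  obtain ⟨-, huv', -⟩ := h.strict _ _ _ huv
  have hvu : v - u ≠ u - v := fun he => by
    have h2 : v + v = u + u := sub_eq_sub_iff_add_eq_add.mp he
    have := h.rel_add_add hv hu hv huv
    rw [h2] at this
    exact h.asymm _ _ _ (h.rel_add_add hu hu hv huv) (by convert this using 1; abel)
  rw [IsCycPos, neg_sub]
  refine (h.total 0 (v - u) (u - v) (sub_ne_zero.mpr huv'.symm).symm hvu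
    (sub_ne_zero.mpr huv')).resolve_right fun hvu' => ?_
  have hvu'' := h.rel_add_of_isCycPos hv (show IsCycPos R (u - v) by rwa [IsCycPos, neg_sub])
  exact h.asymm _ _ _ huv (by convert hvu'' using 1; abel)

theorem lLt_iff_rel (h : IsCyclicOrder R) (ha : IsCycPos R a) (hb : IsCycPos R b) :
    lLt R a b ↔ R 0 a b := by
  rw [lLt_iff_isCycPos_sub]
  refine ⟨fun hab => ?_, h.isCycPos_sub ha hb⟩
  simpa using h.rel_add_of_isCycPos ha hab

theorem isCycPos_of_rel_add_self (h : IsCyclicOrder R) (hy : R 0 y (y + y)) : IsCycPos R y := by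
  obtain ⟨hy0, -, hyy0⟩ := h.strict _ _ _ hy
  have hyy : y ≠ -y := fun he => hyy0 (by nth_rw 2 [he]; exact add_neg_cancel y)
  refine (h.total 0 y (-y) hy0 hyy (neg_ne_zero.mpr hy0.symm)).resolve_right fun hy' => ?_
  exact h.asymm _ _ _ hy (h.cyc _ _ _ (by convert h.compat 0 (-y) y y hy' using 1 <;> abel))

theorem isInfinitesimal_of_forall_isCycPos (h : IsCyclicOrder R)
    (hx : ∀ k : ℕ, IsCycPos R ((k + 1) • x)) : IsInfinitesimal R x := fun k => by
  have := h.rel_add_of_isCycPos (hx k) (by simpa using hx 0)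
  rwa [← succ_nsmul] at this

end IsCyclicOrder

namespace IsInfinitesimal

variable {a x z : G}

theorem rel_nsmul (h : IsCyclicOrder R) (hx : IsInfinitesimal R x) {i j : ℕ} (hij : i < j) :
    R 0 ((i + 1) • x) ((j + 1) • x) := by
  induction j, hij using Nat.le_induction with
  | base => exact hx i
  | succ j _ ih => exact h.trans' _ _ _ _ ih (hx j)

theorem isCycPos_nsmul (h : IsCyclicOrder R) (hx : IsInfinitesimal R x) (k : ℕ) :
    IsCycPos R ((k + 1) • x) := by
  refine h.isCycPos_of_rel_add_self ?_
  rw [← add_nsmul]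
  exact hx.rel_nsmul h (by omega : k < k + 1 + k)

theorem isCycPos (h : IsCyclicOrder R) (hx : IsInfinitesimal R x) : IsCycPos R x := by
  simpa using hx.isCycPos_nsmul h 0

theorem of_rel (h : IsCyclicOrder R) (ha : IsInfinitesimal R a) (hza : R 0 z a) :
    IsInfinitesimal R z := by
  have hz : IsCycPos R z := h.isCycPos_of_rel hza (ha.isCycPos h)
  have hka : ∀ k : ℕ, R 0 ((k + 1) • z) ((k + 1) • a) := by
    intro k
    induction k with
    | zero => simpa using hza
    | succ k ih =>
      have hka := ha.isCycPos_nsmul h k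
      have hkz := h.isCycPos_of_rel ih hka
      rw [succ_nsmul z, succ_nsmul a]
      refine h.trans' _ _ ((k + 1) • a + z) _ ?_ (h.rel_add_add hka hz (ha.isCycPos h) hza)
      simpa only [add_comm z] using h.rel_add_add hz hkz hka ih
  exact h.isInfinitesimal_of_forall_isCycPos fun k =>
    h.isCycPos_of_rel (hka k) (ha.isCycPos_nsmul h k)

end IsInfinitesimal

theorem uwNsmul_zero_mk {x : G} (k : ℕ)
    (hk : ∀ j, j + 2 ≤ k → x = 0 ∨ R 0 ((j + 1) • x) ((j + 2) • x)) :
    uwNsmul R k (0, x) = (0, k • x) := by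
  induction k with
  | zero => simp [uwNsmul]
  | succ k ih =>
    rw [uwNsmul, ih fun j hj => hk j (by omega), uwAdd, if_pos, zero_add, succ_nsmul]
    cases k with
    | zero => simp
    | succ k =>
      rcases hk k (by omega) with hx | hx
      · exact Or.inr (Or.inl hx)
      · exact Or.inr (Or.inr (by rwa [← succ_nsmul]))

namespace IsCyclicOrder

variable {x : G}

theorem uwLt_one_zero_iff (h : IsCyclicOrder R) {p : ℤ × G} :
    uwLt R p (1, 0) ↔ p.1 ≤ 0 := by
  refine ⟨?_, fun hp => Or.inl (by omega)⟩
  rintro (hp | ⟨-, hp⟩ | ⟨-, -, hp⟩)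
  · omega
  · exact absurd rfl (h.strict _ _ _ hp).2.2
  · exact absurd rfl hp

theorem mem_lpart_of_isInfinitesimal (h : IsCyclicOrder R) (hx : x = 0 ∨ IsInfinitesimal R x) :
    x ∈ lpart R := by
  have hmul (k : ℕ) : uwNsmul R k (0, x) = (0, k • x) :=
    uwNsmul_zero_mk k fun j _ => hx.imp_right (· j)
  intro n
  rw [h.uwLt_one_zero_iff, uwZsmul]
  split_ifs
  · simp [hmul]
  · rw [uwNeg, hmul]
    split_ifs <;> simp

theorem isInfinitesimal_of_mem_lpart (h : IsCyclicOrder R) (hx : x ∈ lpart R) (hx0 : x ≠ 0) :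
    IsInfinitesimal R x := by
  intro k
  induction k using Nat.strong_induction_on with
  | _ k ih =>
  by_contra hk
  have hk0 : (k + 1) • x ≠ 0 := by
    cases k with
    | zero => simpa using hx0
    | succ k => exact (h.strict _ _ _ (ih k (by omega))).2.2
  have hwrap := hx (k + 2 : ℕ)
  rw [h.uwLt_one_zero_iff, uwZsmul, if_pos (by omega), Int.toNat_natCast, uwNsmul,
    uwNsmul_zero_mk _ fun j hj => Or.inr (ih j (by omega)), uwAdd, if_neg] at hwrap
  · simp at hwrap
  · rw [← succ_nsmul]
    tauto

theorem mem_lpart_iff (h : IsCyclicOrder R) : x ∈ lpart R ↔ x = 0 ∨ IsInfinitesimal R x :=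
  ⟨fun hx => (em (x = 0)).imp_right (h.isInfinitesimal_of_mem_lpart hx),
    h.mem_lpart_of_isInfinitesimal⟩

theorem not_lLt_zero_of_mem_lpart (h : IsCyclicOrder R) (hx : x ∈ lpart R) : ¬ lLt R x 0 := by
  rw [lLt_iff_isCycPos_sub, zero_sub, IsCycPos, neg_neg]
  intro hneg
  rcases h.mem_lpart_iff.mp hx with rfl | hx
  · exact (h.strict _ _ _ hneg).1 neg_zero.symm
  · exact h.asymm _ _ _ (hx.isCycPos h) hneg

theorem zero_lLt_or_eq_of_mem_lpart (h : IsCyclicOrder R) (hx : x ∈ lpart R) :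
    lLt R 0 x ∨ 0 = x := by
  rcases h.mem_lpart_iff.mp hx with rfl | hx
  · exact Or.inr rfl
  · rw [lLt_iff_isCycPos_sub, sub_zero]
    exact Or.inl (hx.isCycPos h)

theorem isInfinitesimal_of_lLt (h : IsCyclicOrder R) {a : G} (ha : a ∈ lpart R)
    (hx : x ∈ lpart R) (hax : lLt R a x) : IsInfinitesimal R x :=
  h.isInfinitesimal_of_mem_lpart hx fun hx0 => h.not_lLt_zero_of_mem_lpart ha (hx0 ▸ hax)

theorem rel_of_chain (h : IsCyclicOrder R) {y : ℕ → G} {a m : ℕ}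
    (hy : ∀ i, a ≤ i → i + 1 < m → R 0 (y i) (y (i + 1))) {i j : ℕ} (hai : a ≤ i) (hij : i < j)
    (hjm : j < m) : R 0 (y i) (y j) := by
  induction j, hij using Nat.le_induction with
  | base => exact hy i hai hjm
  | succ j _ ih => exact h.trans' _ _ _ _ (ih (by omega)) (hy j (by omega) hjm)

theorem rChain_of_rel (h : IsCyclicOrder R) {y : ℕ → G} {m : ℕ} (hy0 : y 0 = 0)
    (hy : ∀ i, 1 ≤ i → i + 1 < m → R 0 (y i) (y (i + 1))) : RChain R m y := by
  intro i him
  rcases Nat.eq_zero_or_pos i with rfl | hi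
  · rw [hy0]
    exact h.rel_of_chain hy le_rfl (by omega) (by omega)
  · exact h.rel_of_rel_of_rel (hy i hi (by omega))
      (h.rel_of_chain hy (by omega) (by omega) (by omega))

theorem exists_nsmul_rel (h : IsCyclicOrder R) {n : ℕ} (hn : 2 ≤ n) (hreg : NRegularC R n)
    {X : ℕ → G} (hlast : IsCycPos R (X (n - 1)))
    (hX : ∀ i, i + 1 < n → R 0 (X i) (X (i + 1))) :
    ∃ g, R 0 g (X (n - 1)) ∧
      (R (X 0) (n • g) (X (n - 1)) ∨ n • g = X 0 ∨ n • g = X (n - 1)) := by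
  obtain ⟨g, hbtw, hg⟩ := hreg (fun j => X (j - 1)) <| h.rChain_of_rel (by simp) fun i hi hin => by
    by_cases hin' : i = n
    · subst hin'
      simpa [show i ≠ 0 by omega, IsCycPos] using hlast
    · simpa [show i ≠ 0 by omega, hin', show i ≠ n + 1 by omega, show i - 1 + 1 = i by omega]
        using hX (i - 1) (by omega)
  refine ⟨g, ?_, by simpa using hbtw⟩
  simpa [show 0 ≠ n by omega, show 1 ≠ n by omega] using hg 0 (by omega)

theorem lpartNRegular_of_nregularC (h : IsCyclicOrder R) {n : ℕ} (hn : 2 ≤ n)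
    (hreg : NRegularC R n) : lpartNRegular R n := by
  intro X hmem hlt
  by_cases hX0 : X 0 = 0
  · refine ⟨0, h.mem_lpart_of_isInfinitesimal (Or.inl rfl), Or.inr (by simp [hX0]), ?_⟩
    simpa [eq_comm] using h.zero_lLt_or_eq_of_mem_lpart (hmem (n - 1) (by omega))
  have hinf : ∀ i < n, IsInfinitesimal R (X i)
    | 0, hi => h.isInfinitesimal_of_mem_lpart (hmem 0 hi) hX0
    | i + 1, hi => h.isInfinitesimal_of_lLt (hmem i (by omega)) (hmem (i + 1) hi) (hlt i hi)
  have hpos (i : ℕ) (hi : i < n) : IsCycPos R (X i) := (hinf i hi).isCycPos h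
  have hrel (i : ℕ) (hi : i + 1 < n) : R 0 (X i) (X (i + 1)) :=
    (h.lLt_iff_rel (hpos i (by omega)) (hpos (i + 1) hi)).mp (hlt i hi)
  have hfirst := hpos 0 (by omega)
  have hlast := hpos (n - 1) (by omega)
  have hspan : R 0 (X 0) (X (n - 1)) :=
    h.rel_of_chain (a := 0) (fun i _ => hrel i) le_rfl (by omega) (by omega)
  obtain ⟨g, hg, hbtw⟩ := h.exists_nsmul_rel hn hreg hlast hrel
  refine ⟨g, h.mem_lpart_of_isInfinitesimal (Or.inr ((hinf (n - 1) (by omega)).of_rel h hg)), ?_⟩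
  rcases hbtw with hbtw | he | he
  · obtain ⟨h1, h2⟩ := h.rel_and_rel_of_rel hspan hbtw
    have hng := h.isCycPos_of_rel h2 hlast
    exact ⟨Or.inl ((h.lLt_iff_rel hfirst hng).mpr h1), Or.inl ((h.lLt_iff_rel hng hlast).mpr h2)⟩
  · rw [he]
    exact ⟨Or.inr rfl, Or.inl ((h.lLt_iff_rel hfirst hlast).mpr hspan)⟩
  · rw [he]
    exact ⟨Or.inl ((h.lLt_iff_rel hfirst hlast).mpr hspan), Or.inr rfl⟩

end IsCyclicOrder

end

/-- If `G` is `n`-regular then its linear part `l(G)` is an `n`-regular linearly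
ordered group; in particular if `G` is regular then `l(G)` is regular. -/
theorem lpart_nregular_of_nregular (G : Type*) [AddCommGroup G]
    (R : G → G → G → Prop) (h : IsCyclicOrder R) :
    (∀ n : ℕ, 2 ≤ n → NRegularC R n → lpartNRegular R n) ∧
    ((∀ n : ℕ, 2 ≤ n → NRegularC R n) → ∀ n : ℕ, 2 ≤ n → lpartNRegular R n) :=
  ⟨fun _ hn => h.lpartNRegular_of_nregularC hn,
    fun hreg n hn => h.lpartNRegular_of_nregularC hn (hreg n hn)⟩
end

section
/- Let (G,R) be a cyclically ordered abelian group and n ≥ 2 an integer. If G is c-n-regular and G is not c-archimedean, then K(G) contains a primitive n-th root of 1. -/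
namespace CycAux

variable {G : Type*} [AddCommGroup G] {R : G → G → G → Prop}

def Ppos (R : G → G → G → Prop) (x : G) : Prop :=
  ∀ j : ℕ, 1 ≤ j → R 0 (j • x) ((j + 1) • x)

variable (h : IsCyclicOrder R)
include h

lemma cyc2 {a b c : G} (hr : R a b c) : R c a b := h.cyc _ _ _ (h.cyc _ _ _ hr)

lemma trans0 {a b c : G} (h1 : R 0 a b) (h2 : R 0 b c) : R 0 a c :=
  h.trans' 0 a b c h1 h2

/-- negation reverses the cut-at-0 order. -/
lemma rev {p q : G} (h1 : R 0 p q) : R 0 (-q) (-p) := by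
  obtain ⟨hp0, hpq, hq0⟩ := h.strict _ _ _ h1
  by_contra hcon
  have h2 : R 0 (-p) (-q) := by
    rcases h.total 0 (-q) (-p) (fun e => hq0 (neg_eq_zero.mp e.symm))
      (fun e => hpq (by simpa using congrArg Neg.neg e.symm))
      (fun e => hp0 (neg_eq_zero.mp e).symm) with h' | h'
    · exact absurd h' hcon
    · exact h'
  have v' : R 0 (-q) (p - q) := by
    have H := h.compat 0 p q (-q) h1
    rw [zero_add, add_neg_cancel, ← sub_eq_add_neg] at H
    exact cyc2 h H
  have iv : R 0 (p - q) p := by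
    have H := h.compat 0 (-p) (-q) p h2
    rw [zero_add, neg_add_cancel, show -q + p = p - q by abel] at H
    exact h.cyc _ _ _ H
  have t2 : R 0 (-q) q := trans0 h (trans0 h v' iv) h1
  have iii : R 0 (q - p) (-p) := by
    have H := h.compat 0 p q (-p) h1
    rw [zero_add, add_neg_cancel, show q + -p = q - p by abel] at H
    exact h.cyc _ _ _ H
  have vi : R 0 q (q - p) := by
    have H := h.compat 0 (-p) (-q) q h2
    rw [zero_add, neg_add_cancel, show -p + q = q - p by abel] at H
    exact cyc2 h H
  have t4 : R 0 q (-q) := trans0 h (trans0 h vi iii) h2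
  exact h.asymm _ _ _ t2 t4

/-- negation reverses arbitrary triples. -/
lemma trev {a b c : G} (h1 : R a b c) : R (-c) (-b) (-a) := by
  have H := h.compat a b c (-a) h1
  rw [add_neg_cancel, show b + -a = b - a by abel, show c + -a = c - a by abel] at H
  have H2 := rev h H
  have H3 := h.compat 0 (-(c - a)) (-(b - a)) (-a) H2
  rw [zero_add, show -(c - a) + -a = -c by abel, show -(b - a) + -a = -b by abel] at H3
  exact h.cyc _ _ _ H3

/-- from `0 ⊏ u ⊏ v ⊏ w` (cut at 0) we get the triple `R u v w`. -/
lemma cyc3 {u v w : G} (h1 : R 0 u v) (h2 : R 0 v w) : R u v w := by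
  have h3 : R 0 u w := trans0 h h1 h2
  by_contra hcon
  have hA : R u w v :=
    (h.total u v w (h.strict _ _ _ h1).2.1 (h.strict _ _ _ h2).2.1
      (h.strict _ _ _ h3).2.1.symm).resolve_left hcon
  have hB : R v u w := cyc2 h hA
  have hC : R v 0 u := cyc2 h h1
  have hD : R v 0 w := h.trans' v 0 u w hC hB
  exact h.asymm _ _ _ h2 (h.cyc _ _ _ hD)

/-- link lemma for chains. -/
lemma link {a b w : G} (h1 : R 0 a w) (h2 : R a b w) : R 0 a b ∧ R 0 b w := by
  constructor
  · have := h.trans' a b w 0 h2 (h.cyc _ _ _ h1)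
    exact cyc2 h this
  · have hwa : R w 0 a := cyc2 h h1
    have hwb : R w 0 b := h.trans' w 0 a b hwa (cyc2 h h2)
    exact h.cyc _ _ _ hwb

/-- if `c ⊏ v` and `u` is cyclically between `c` and `v` then `c ⊏ u ⊏ v`. -/
lemma cmp2 {c u v : G} (h1 : R c u v) (h2 : R 0 c v) : R 0 c u ∧ R 0 u v := by
  have hcu : R 0 c u := by
    have := h.trans' c u v 0 h1 (h.cyc _ _ _ h2)
    exact cyc2 h this
  refine ⟨hcu, ?_⟩
  by_contra hcon
  have hvu : R 0 v u :=
    (h.total 0 u v (h.strict _ _ _ hcu).2.2.symm (h.strict _ _ _ h1).2.1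
      (h.strict _ _ _ h2).2.2).resolve_left hcon
  have hv0c : R v 0 c := cyc2 h h2
  have hvcu : R v c u := cyc2 h h1
  have : R v 0 u := h.trans' v 0 c u hv0c hvcu
  exact h.asymm _ _ _ this (h.cyc _ _ _ hvu)

/-- monotonicity of multiples of a positive infinitesimal. -/
lemma mono {x : G} (hP : Ppos R x) : ∀ a b : ℕ, 1 ≤ a → a < b → R 0 (a • x) (b • x) := by
  intro a b ha hab
  induction b, hab using Nat.le_induction with
  | base => exact hP a ha
  | succ b hb ih => exact trans0 h ih (hP b (by omega))

lemma nzero {x : G} (hP : Ppos R x) : ∀ a : ℕ, 1 ≤ a → a • x ≠ 0 := by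
  intro a ha
  exact fun e => (h.strict _ _ _ (hP a ha)).1 e.symm

/-- positive multiples come before negative multiples. -/
lemma posneg {x : G} (hP : Ppos R x) : ∀ a b : ℕ, 1 ≤ a → 1 ≤ b →
    R 0 (a • x) (-(b • x)) := by
  intro a b ha hb
  have hne : a • x ≠ -(b • x) := by
    intro e
    have : (a + b) • x = 0 := by rw [add_nsmul, e]; abel
    exact nzero h hP (a + b) (by omega) this
  by_contra hcon
  have h2 : R 0 (-(b • x)) (a • x) :=
    (h.total 0 (a • x) (-(b • x)) (Ne.symm (nzero h hP a ha))
      hne (neg_ne_zero.mpr (nzero h hP b hb))).resolve_left hcon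
  have H := h.compat 0 (-(b • x)) (a • x) (b • x) h2
  rw [zero_add, neg_add_cancel, show a • x + b • x = (a + b) • x from (add_nsmul x a b).symm] at H
  have : R 0 ((a + b) • x) (b • x) := h.cyc _ _ _ H
  exact h.asymm _ _ _ (mono h hP b (a + b) hb (by omega)) this

/-- convexity workhorse: invariant `j•y ⊑ j•h` and the step facts. -/
lemma stepQ {hh y : G} (hP : Ppos R hh) (hy : R 0 y hh) :
    ∀ j : ℕ, 1 ≤ j → (j • y = j • hh ∨ R 0 (j • y) (j • hh)) →
      (R 0 (j • y) ((j + 1) • y) ∧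
        ((j + 1) • y = (j + 1) • hh ∨ R 0 ((j + 1) • y) ((j + 1) • hh))) := by
  intro j hj hQ
  have hhne : hh ≠ 0 := by
    have := nzero h hP 1 le_rfl; rwa [one_nsmul] at this
  -- first: R 0 (j•y) (j•y + hh) and j•y + hh ⊑ (j+1)•hh
  have main : R 0 (j • y) (j • y + hh) ∧
      (j • y + hh = (j + 1) • hh ∨ R 0 (j • y + hh) ((j + 1) • hh)) := by
    rcases hQ with hQ | hQ
    · refine ⟨?_, Or.inl ?_⟩
      · rw [hQ, ← succ_nsmul]; exact hP j hj
      · rw [hQ, ← succ_nsmul]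
    · have hcmp : R hh (j • y + hh) ((j + 1) • hh) := by
        have H := h.compat 0 (j • y) (j • hh) hh hQ
        rwa [zero_add, ← succ_nsmul] at H
      have h1j : R 0 hh ((j + 1) • hh) := by
        have := mono h hP 1 (j + 1) le_rfl (by omega); rwa [one_nsmul] at this
      obtain ⟨Hm1, Hm2⟩ := cmp2 h hcmp h1j
      refine ⟨?_, Or.inr Hm2⟩
      by_contra hcon
      have hc0 : j • y ≠ 0 := fun e => (h.strict _ _ _ hQ).1 e.symm
      have hch : j • y ≠ j • y + hh := fun e => hhne (by
        have := congrArg (fun t => t - j • y) e; simpa using this.symm)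
      have hsum0 : j • y + hh ≠ 0 := fun e => (h.strict _ _ _ Hm2).1 e.symm
      have hbad : R 0 (j • y + hh) (j • y) :=
        (h.total 0 (j • y) (j • y + hh) (Ne.symm hc0) hch hsum0).resolve_left hcon
      have H := h.compat 0 (j • y + hh) (j • y) (-(j • y)) hbad
      rw [zero_add, add_neg_cancel, show j • y + hh + -(j • y) = hh by abel] at H
      have hx2 : R 0 (-(j • y)) hh := cyc2 h H
      have hrev : R 0 (-(j • hh)) (-(j • y)) := rev h hQ
      have hfin : R 0 (-(j • hh)) hh := trans0 h hrev hx2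
      have hpn : R 0 hh (-(j • hh)) := by
        have := posneg h hP 1 j le_rfl hj; rwa [one_nsmul] at this
      exact h.asymm _ _ _ hpn hfin
  obtain ⟨Hstep, Hub⟩ := main
  have hyc : R (j • y) (j • y + y) (j • y + hh) := by
    have H := h.compat 0 y hh (j • y) hy
    rwa [zero_add, add_comm y (j • y), add_comm hh (j • y)] at H
  obtain ⟨S1, S2⟩ := cmp2 h hyc Hstep
  have Sj : R 0 (j • y) ((j + 1) • y) := by rwa [← succ_nsmul] at S1
  refine ⟨Sj, ?_⟩
  rcases Hub with he | hlt
  · right; rw [← he, succ_nsmul]; exact S2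
  · right; rw [succ_nsmul]; exact trans0 h S2 hlt

lemma monoMul {hh y : G} (hP : Ppos R hh) (hy : R 0 y hh) :
    ∀ j : ℕ, 1 ≤ j → (j • y = j • hh ∨ R 0 (j • y) (j • hh)) := by
  intro j hj
  induction j, hj using Nat.le_induction with
  | base => right; rw [one_nsmul, one_nsmul]; exact hy
  | succ j hj ih => exact (stepQ h hP hy j hj ih).2

/-- convexity: anything between 0 and a positive infinitesimal is one. -/
lemma convex {hh y : G} (hP : Ppos R hh) (hy : R 0 y hh) : Ppos R y :=
  fun j hj => (stepQ h hP hy j hj (monoMul h hP hy j hj)).1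

lemma powers {x : G} (hP : Ppos R x) : ∀ m : ℕ, 1 ≤ m → Ppos R (m • x) := by
  intro m hm j hj
  rw [← mul_nsmul, ← mul_nsmul]
  exact mono h hP (m * j) (m * (j + 1)) (Nat.one_le_iff_ne_zero.mpr (by positivity))
    (by have : 0 < m := hm; exact (Nat.mul_lt_mul_left this).mpr (by omega))

/-- a nonzero element and its negation cannot both be positive infinitesimals. -/
lemma negnot {w : G} (h1 : Ppos R w) (h2 : Ppos R (-w)) : False := by
  have t1 : R 0 (1 • w) (2 • w) := by have := h1 1 le_rfl; simpa using this
  have t2 : R 0 (-(1 • w)) (-(2 • w)) := by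
    have := h2 1 le_rfl
    simpa [smul_neg] using this
  have := rev h t2
  rw [neg_neg, neg_neg] at this
  exact h.asymm _ _ _ t1 this

/-- difference of comparable elements. -/
lemma diffLt {p q : G} (h1 : R 0 q p) : R 0 (p - q) p := by
  obtain ⟨h0q, hqp, hp0⟩ := h.strict _ _ _ h1
  have hne1 : p - q ≠ 0 := sub_ne_zero.mpr (Ne.symm hqp)
  have hne2 : p - q ≠ p := fun e => h0q (by
    have := congrArg (fun t => p - t) e
    simp only [sub_sub_cancel, sub_self] at this
    exact this.symm)
  by_contra hcon
  have hbad : R 0 p (p - q) :=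
    (h.total 0 (p - q) p (Ne.symm hne1) hne2 hp0).resolve_left hcon
  have H := h.compat 0 p (p - q) (-p) hbad
  rw [zero_add, add_neg_cancel, show p - q + -p = -q by abel] at H
  have : R 0 (-q) (-p) := h.cyc _ _ _ H
  have := rev h this
  rw [neg_neg, neg_neg] at this
  exact h.asymm _ _ _ h1 this


section Lpart

lemma uwNsmul_ppos (x : G)
    (hx : ∀ m : ℕ, 1 ≤ m → (m • x = 0 ∨ x = 0 ∨ R 0 (m • x) ((m + 1) • x))) :
    ∀ m : ℕ, uwNsmul R m ((0 : ℤ), x) = (0, m • x) := by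
  intro m
  induction m with
  | zero => simp [uwNsmul, zero_nsmul]
  | succ k ih =>
    rw [uwNsmul, ih, uwAdd]
    have hcond : ((((0:ℤ), k • x) : ℤ × G).2 = 0 ∨ (((0:ℤ), x) : ℤ × G).2 = 0 ∨
        R 0 (((0:ℤ), k • x) : ℤ × G).2 ((((0:ℤ), k • x) : ℤ × G).2 + (((0:ℤ), x) : ℤ × G).2)) := by
      rcases Nat.eq_zero_or_pos k with hk | hk
      · left; simp [hk, zero_nsmul]
      · rcases hx k hk with h' | h' | h'
        · left; exact h'
        · right; left; exact h'
        · right; right; simpa [← succ_nsmul] using h'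
    rw [if_pos hcond]
    simp [← succ_nsmul]

lemma lpart_strong (x : G) (hx : x ∈ lpart R) (hx0 : x ≠ 0) :
    ∀ m : ℕ, 1 ≤ m → uwNsmul R m ((0 : ℤ), x) = (0, m • x) ∧ m • x ≠ 0 ∧
      (2 ≤ m → R 0 ((m - 1) • x) (m • x)) := by
  intro m hm
  induction m, hm using Nat.le_induction with
  | base =>
    refine ⟨?_, by simpa using hx0, by omega⟩
    rw [show (1 : ℕ) = 0 + 1 from rfl, uwNsmul, uwNsmul, uwAdd]
    rw [if_pos (Or.inl rfl)]
    simp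
  | succ m hm ih =>
    obtain ⟨heq, hne, _⟩ := ih
    by_cases hc : R 0 (m • x) (m • x + x)
    · have hres : uwNsmul R (m + 1) ((0 : ℤ), x) = (0, (m + 1) • x) := by
        rw [uwNsmul, heq, uwAdd, if_pos (Or.inr (Or.inr hc))]
        simp [← succ_nsmul]
      refine ⟨hres, ?_, ?_⟩
      · rw [succ_nsmul]; exact fun e => (h.strict _ _ _ hc).2.2 e
      · intro _
        have : R 0 (m • x) ((m + 1) • x) := by rwa [succ_nsmul]
        simpa using this
    · exfalso
      have hres : uwNsmul R (m + 1) ((0 : ℤ), x) = (1, m • x + x) := by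
        rw [uwNsmul, heq, uwAdd, if_neg (by
          push_neg
          exact ⟨hne, hx0, hc⟩)]
        simp
      have hmem := hx ((m + 1 : ℕ) : ℤ)
      rw [uwZsmul, if_pos (by positivity)] at hmem
      rw [Int.toNat_natCast, hres] at hmem
      rcases hmem with h' | h' | h'
      · exact absurd h' (by norm_num)
      · exact (h.strict _ _ _ h'.2).2.2 rfl
      · exact h'.2.2 rfl

lemma mem_lpart_iff (x : G) : x ∈ lpart R ↔ (x = 0 ∨ Ppos R x) := by
  constructor
  · intro hx
    by_cases hx0 : x = 0
    · exact Or.inl hx0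
    · refine Or.inr (fun j hj => ?_)
      have := (lpart_strong h x hx hx0 (j + 1) (by omega)).2.2 (by omega)
      simpa using this
  · intro hx
    have hcond : ∀ m : ℕ, 1 ≤ m → (m • x = 0 ∨ x = 0 ∨ R 0 (m • x) ((m + 1) • x)) := by
      intro m hm
      rcases hx with hx | hx
      · exact Or.inr (Or.inl hx)
      · exact Or.inr (Or.inr (hx m hm))
    intro k
    rcases le_or_gt 0 k with hk | hk
    · rw [uwZsmul, if_pos hk, uwNsmul_ppos h x hcond]
      exact Or.inl (by norm_num)
    · rw [uwZsmul, if_neg (by omega), uwNsmul_ppos h x hcond, uwNeg]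
      by_cases hz : ((-k).toNat • x) = 0
      · rw [if_pos (by simpa using hz)]
        exact Or.inl (by norm_num)
      · rw [if_neg (by simpa using hz)]
        exact Or.inl (by norm_num)

end Lpart

end CycAux

/-- If `G` is c-`n`-regular and not c-archimedean, then `K(G)` contains a
primitive `n`-th root of `1`. -/
theorem kprimitiveRoot_of_cnregular (G : Type*) [AddCommGroup G]
    (R : G → G → G → Prop) (h : IsCyclicOrder R) (n : ℕ) (hn : 2 ≤ n)
    (hreg : CNRegular R n) (harch : lpart R ≠ {(0 : G)}) :
    KPrimitiveRoot R n := by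
  classical
  open CycAux in
  have h0mem : (0 : G) ∈ lpart R := (mem_lpart_iff h 0).mpr (Or.inl rfl)
  obtain ⟨z, hzmem, hz0⟩ : ∃ z ∈ lpart R, z ≠ 0 := by
    by_contra hcon
    push_neg at hcon
    exact harch (Set.eq_singleton_iff_unique_mem.mpr ⟨h0mem, fun w hw => hcon w hw⟩)
  have hPz : Ppos R z := ((mem_lpart_iff h z).mp hzmem).resolve_left hz0
  set xf : ℕ → G := fun j => -((n + 1 - j) • z) with hxf
  have hxf1 : xf 1 = -(n • z) := by
    show -((n + 1 - 1) • z) = _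
    rw [show n + 1 - 1 = n from by omega]
  have hxfn : xf n = -(1 • z) := by
    show -((n + 1 - n) • z) = _
    rw [show n + 1 - n = 1 from by omega]
  have hchain : RChain R (n + 1) (fun i => if i = 0 then 0 else xf i) := by
    intro i hi
    simp only [show n + 1 - 1 = n from by omega]
    by_cases hi0 : i = 0
    · subst hi0
      rw [if_pos rfl, if_neg (show ¬(0 + 1 = 0) from by omega),
        if_neg (show ¬(n = 0) from by omega)]
      show R 0 (xf 1) (xf n)
      rw [hxf1, hxfn]
      exact rev h (mono h hPz 1 n le_rfl (by omega))
    · rw [if_neg hi0, if_neg (show ¬(i + 1 = 0) from by omega),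
        if_neg (show ¬(n = 0) from by omega)]
      show R (-((n + 1 - i) • z)) (-((n + 1 - (i + 1)) • z)) (xf n)
      rw [hxfn, show n + 1 - (i + 1) = n - i from by omega]
      refine cyc3 h ?_ ?_
      · exact rev h (mono h hPz (n - i) (n + 1 - i) (by omega) (by omega))
      · exact rev h (mono h hPz 1 (n - i) le_rfl (by omega))
  obtain ⟨g, hC1, hC2⟩ := hreg xf hchain
  have hstep : ∀ i : ℕ, i + 3 ≤ n + 1 → R (i • g) ((i + 1) • g) (-(1 • z)) := by
    intro i hi
    have H := hC2 i hi
    simp only [show n + 1 - 1 = n from by omega, if_true] at H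
    rw [if_neg (show ¬(i = n) from by omega), if_neg (show ¬(i + 1 = n) from by omega),
      hxfn] at H
    exact H
  have hpos : ∀ j : ℕ, 1 ≤ j → j ≤ n - 1 → R 0 (j • g) (-(1 • z)) := by
    intro j hj1 hj2
    induction j with
    | zero => omega
    | succ j ih =>
      rcases Nat.eq_zero_or_pos j with hj0 | hj0
      · subst hj0
        have H := hstep 0 (by omega)
        simpa using H
      · exact (link h (ih (by omega) (by omega)) (hstep j (by omega))).2
  have hcons : ∀ j : ℕ, 1 ≤ j → j ≤ n - 2 → R 0 (j • g) ((j + 1) • g) :=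
    fun j h1 h2 => (link h (hpos j h1 (by omega)) (hstep j (by omega))).1
  have hgne : g ≠ 0 := fun e =>
    (h.strict _ _ _ (hpos 1 le_rfl (by omega))).1 (by rw [e]; simp)
  have hu : Ppos R (-(n • g)) ∧ (-(n • g) = n • z ∨ R 0 (-(n • g)) (n • z)) := by
    rcases hC1 with hA | hB | hC
    · rw [hxf1] at hA
      have e : -(n • g) = n • z := by rw [hA, neg_neg]
      exact ⟨e ▸ powers h hPz n (by omega), Or.inl e⟩
    · rw [hxfn] at hB
      have e : -(n • g) = 1 • z := by rw [hB, neg_neg]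
      refine ⟨?_, Or.inr ?_⟩
      · rw [e, one_nsmul]; exact hPz
      · rw [e]; exact mono h hPz 1 n le_rfl (by omega)
    · rw [hxf1, hxfn] at hC
      have hC' := trev h hC
      rw [neg_neg, neg_neg] at hC'
      obtain ⟨h1u, h2u⟩ := cmp2 h hC' (mono h hPz 1 n le_rfl (by omega))
      exact ⟨convex h (powers h hPz n (by omega)) h2u, Or.inr h2u⟩
  refine ⟨-g, ?_, ?_⟩
  · rw [smul_neg]
    exact (mem_lpart_iff h _).mpr (Or.inr hu.1)
  · intro k hk1 hk2 hmem
    rw [smul_neg] at hmem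
    rcases (mem_lpart_iff h _).mp hmem with he | hPv
    · exact (h.strict _ _ _ (hpos k hk1 (by omega))).1 (neg_eq_zero.mp he).symm
    · rcases le_or_gt k (n - 2) with hk' | hk'
      · -- case A : k ≤ n - 2
        have hc := hcons k hk1 hk'
        have H := h.compat 0 (k • g) ((k + 1) • g) (-(k • g)) hc
        rw [zero_add, add_neg_cancel,
          show (k + 1) • g + -(k • g) = g from by rw [succ_nsmul]; abel] at H
        have hgv : R 0 g (-(k • g)) := h.cyc _ _ _ H
        have hPg : Ppos R g := convex h hPv hgv
        exact negnot h (powers h hPg k hk1) hPv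
      · -- case B : k = n - 1
        have hkn : k = n - 1 := by omega
        have hueq : n • g = (n - 1) • g + g := by
          rw [← succ_nsmul]
          congr 1
          omega
        have hgeq : g = -(k • g) - -(n • g) := by rw [hkn, hueq]; abel
        have hune : -(n • g) ≠ 0 := by
          have := nzero h hu.1 1 le_rfl
          rwa [one_nsmul] at this
        have hvne : -(k • g) ≠ 0 := fun e =>
          (h.strict _ _ _ (hpos k hk1 (by omega))).1 (neg_eq_zero.mp e).symm
        by_cases huv : -(n • g) = -(k • g)
        · exact hgne (by rw [hgeq, ← huv, sub_self])
        rcases h.total 0 (-(n • g)) (-(k • g)) (Ne.symm hune) huv hvne with hUV | hVU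
        · have hd := diffLt h hUV
          rw [← hgeq] at hd
          have hPg : Ppos R g := convex h hPv hd
          exact negnot h (powers h hPg k hk1) hPv
        · have hd := diffLt h hVU
          have e : -g = -(n • g) - -(k • g) := by
            have h' := congrArg (fun t : G => -t) hgeq
            simpa only [neg_sub] using h'
          rw [← e] at hd
          have hPng : Ppos R (-g) := convex h hu.1 hd
          rcases le_or_gt 3 n with hn3 | hn3
          · have hc12 := hcons 1 le_rfl (by omega)
            have hm := hPng 1 le_rfl
            rw [smul_neg, smul_neg] at hm
            have hrev := rev h hm
            rw [neg_neg, neg_neg] at hrev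
            exact h.asymm _ _ _ hc12 hrev
          · -- n = 2, k = 1
            have hk1' : k = 1 := by omega
            subst hk1'
            have hn2 : n = 2 := by omega
            subst hn2
            have hzv : R 0 (1 • z) (-(1 • g)) := by
              have := rev h (hpos 1 le_rfl (by omega))
              rwa [neg_neg] at this
            have hmm := monoMul h hPv hzv 2 (by omega)
            have e2z : (2 : ℕ) • ((1 : ℕ) • z) = 2 • z := by rw [one_nsmul]
            have e2v : (2 : ℕ) • (-((1 : ℕ) • g)) = -(2 • g) := by
              rw [one_nsmul]
              exact smul_neg 2 g
            rw [e2z, e2v] at hmm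
            rcases hu.2 with heq | hlt
            · rcases hmm with hmm1 | hmm1
              · -- 2•z = -(2•g) : torsion contradiction
                have hdt := diffLt h hzv
                have hPt : Ppos R (-((1 : ℕ) • g) - (1 : ℕ) • z) := convex h hPv hdt
                have h2t : ((1 : ℕ) + 1) • (-((1 : ℕ) • g) - (1 : ℕ) • z) = 0 := by
                  have h1 : -((1 : ℕ) • g) + -((1 : ℕ) • g) = 2 • z := by
                    rw [← two_nsmul, e2v, ← hmm1]
                  have h2 : (1 : ℕ) • z + (1 : ℕ) • z = 2 • z := by
                    rw [← two_nsmul, e2z]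
                  rw [add_nsmul, one_nsmul,
                    show (-((1 : ℕ) • g) - (1 : ℕ) • z) + (-((1 : ℕ) • g) - (1 : ℕ) • z)
                      = (-((1 : ℕ) • g) + -((1 : ℕ) • g)) - ((1 : ℕ) • z + (1 : ℕ) • z) from by
                        abel, h1, h2, sub_self]
                have := hPt 1 le_rfl
                rw [h2t] at this
                exact (h.strict _ _ _ this).2.2 rfl
              · -- R 0 (2•z) (-(2•g)) and -(2•g) = 2•z
                rw [heq] at hmm1
                exact (h.strict _ _ _ hmm1).2.1 rfl
            · rcases hmm with hmm1 | hmm1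
              · rw [← hmm1] at hlt
                exact (h.strict _ _ _ hlt).2.1 rfl
              · exact h.asymm _ _ _ hmm1 hlt
end

section
/- Let (G,R) be a cyclically ordered abelian group and n ≥ 2 an integer. If the unwound uw(G) is an n-regular linearly ordered group, then G is n-regular. -/
/-!
In the linear order `b <₀ c ↔ R 0 b c` on `G ∖ {0}`, the hypothesis gives `x₁ <₀ ⋯ <₀ xₙ`,
so the points `(0, xᵢ)` of level `0` of `uw(G)` increase and regularity of `uw(G)` gives
`g = (m, a)` with `(0, x₁) ≤ n • g ≤ (0, xₙ)`. Then `n • g` has level `0`. The level of `k • g`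
grows by `m` or `m + 1` at each step, so `m = 0` and no step before `n` carries. A step
`k • a ↦ (k + 1) • a` without carry means `k • a <₀ (k + 1) • a`, so
`0, a, 2 • a, …, (n - 1) • a, xₙ` is a cyclic chain.
-/

section

variable {G : Type*} [AddCommGroup G] {R : G → G → G → Prop}

namespace IsCyclicOrder

theorem rel_of_rel_of_rel_s6 (h : IsCyclicOrder R) {c u v w : G} (huv : R c u v) (hvw : R c v w) :
    R u v w :=
  h.cyc _ _ _ <| h.cyc _ _ _ <|
    h.trans' v w c u (h.cyc _ _ _ hvw) (h.cyc _ _ _ (h.cyc _ _ _ huv))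

theorem rel_of_forall_rel_succ (h : IsCyclicOrder R) {c : G} {y : ℕ → G} {i j : ℕ}
    (hstep : ∀ k, i ≤ k → k < j → R c (y k) (y (k + 1))) (hij : i < j) : R c (y i) (y j) := by
  induction j, hij using Nat.le_induction with
  | base => exact hstep i le_rfl (Nat.lt_succ_self i)
  | succ j hij ih =>
    exact h.trans' _ _ _ _ (ih fun k hik hkj => hstep k hik (by omega))
      (hstep j (by omega) (Nat.lt_succ_self j))

theorem rel_or_eq_or_eq_of_rel_or_eq (h : IsCyclicOrder R) {e b c d : G}
    (hbd : R e b d ∨ b = d) (hdc : R e d c ∨ d = c) : R b d c ∨ d = b ∨ d = c := by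
  rcases hbd with hbd | rfl
  · rcases hdc with hdc | rfl
    · exact Or.inl (h.rel_of_rel_of_rel_s6 hbd hdc)
    · exact Or.inr (Or.inr rfl)
  · exact Or.inr (Or.inl rfl)

end IsCyclicOrder

namespace RChain

variable {m : ℕ} {y : ℕ → G}

theorem rel_last (h : IsCyclicOrder R) (hy : RChain R m y) {i j : ℕ} (hij : i < j)
    (hj : j + 2 ≤ m) : R (y i) (y j) (y (m - 1)) :=
  h.cyc _ _ _ <| h.rel_of_forall_rel_succ
    (fun k _ hkj => h.cyc _ _ _ (h.cyc _ _ _ (hy k (by omega)))) hij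

theorem rel (h : IsCyclicOrder R) (hy : RChain R m y) {i j k : ℕ} (hij : i < j) (hjk : j < k)
    (hk : k < m) : R (y i) (y j) (y k) := by
  obtain rfl | hk' := eq_or_lt_of_le (Nat.le_sub_one_of_lt hk)
  · exact hy.rel_last h hij (by omega)
  · exact h.rel_of_rel_of_rel_s6 (h.cyc _ _ _ (h.cyc _ _ _ (hy.rel_last h hij (by omega))))
      (h.cyc _ _ _ (h.cyc _ _ _ (hy.rel_last h hjk (by omega))))

theorem of_rel_zero (h : IsCyclicOrder R)
    (hy : ∀ i j, 0 < i → i < j → j < m → R (y 0) (y i) (y j)) : RChain R m y := by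
  intro i hi
  obtain rfl | hi0 := Nat.eq_zero_or_pos i
  · exact hy 1 (m - 1) one_pos (by omega) (by omega)
  · exact h.rel_of_rel_of_rel_s6 (hy i (i + 1) hi0 (by omega) (by omega))
      (hy (i + 1) (m - 1) (by omega) (by omega) (by omega))

theorem of_rel_nsmul (h : IsCyclicOrder R) {n : ℕ} (hn : 0 < n) {a c : G}
    (hrel : ∀ i j, 0 < i → i < j → j ≤ n → R 0 (i • a) (j • a)) (hc : R 0 (n • a) c ∨ n • a = c) :
    RChain R (n + 1) fun i => if i = n then c else i • a := by
  refine of_rel_zero h fun i j hi hij hj => ?_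
  have hin : i ≠ n := by omega
  simp only [if_neg hn.ne, if_neg hin, zero_nsmul]
  split_ifs with hjn
  · subst hjn
    rcases hc with hc | rfl
    · exact h.trans' _ _ _ _ (hrel i j hi hij le_rfl) hc
    · exact hrel i j hi hij le_rfl
  · exact hrel i j hi hij (by omega)

end RChain

theorem rel_zero_of_rchain_zero_neg (h : IsCyclicOrder R) {n : ℕ} {x : ℕ → G}
    (hx : RChain R (n + 2) fun i => if i = 0 then 0 else if i = n + 1 then -x n else x i)
    {i j : ℕ} (hi : 0 < i) (hij : i < j) (hjn : j ≤ n) : R 0 (x i) (x j) := by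
  have hi' : i ≠ n + 1 := by omega
  have hj0 : j ≠ 0 := by omega
  have hj' : j ≠ n + 1 := by omega
  simpa [hi.ne', hi', hj0, hj'] using hx.rel h hi hij (by omega)

theorem ne_zero_of_rchain_zero_neg (h : IsCyclicOrder R) {n : ℕ} (hn : 0 < n) {x : ℕ → G}
    (hx : RChain R (n + 2) fun i => if i = 0 then 0 else if i = n + 1 then -x n else x i) :
    x 1 ≠ 0 := by
  have h01 := hx.rel h (i := 0) (j := 1) (k := n + 1) one_pos (by omega) (by omega)
  simp only [if_pos, if_neg (by omega : (1 : ℕ) ≠ 0), if_neg (by omega : 1 ≠ n + 1)] at h01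
  exact (h.strict _ _ _ h01).1.symm

theorem uwAdd_snd (p q : ℤ × G) : (uwAdd R p q).2 = p.2 + q.2 := by
  unfold uwAdd; split_ifs <;> rfl

theorem uwAdd_no_carry {p q : ℤ × G} (hpq : (uwAdd R p q).1 = p.1 + q.1) :
    p.2 = 0 ∨ q.2 = 0 ∨ R 0 p.2 (p.2 + q.2) := by
  unfold uwAdd at hpq; split_ifs at hpq with hcond
  · exact hcond
  · omega

theorem uwNsmul_snd (k : ℕ) (p : ℤ × G) : (uwNsmul R k p).2 = k • p.2 := by
  induction k with
  | zero => simp [uwNsmul]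
  | succ k ih => rw [uwNsmul, uwAdd_snd, ih, succ_nsmul]

theorem uwNsmul_succ_fst_eq_or (k : ℕ) (p : ℤ × G) :
    (uwNsmul R (k + 1) p).1 = (uwNsmul R k p).1 + p.1 ∨
      (uwNsmul R (k + 1) p).1 = (uwNsmul R k p).1 + p.1 + 1 := by
  rw [uwNsmul]; unfold uwAdd; split_ifs <;> simp

theorem mul_fst_le_uwNsmul_fst (k : ℕ) (p : ℤ × G) : k * p.1 ≤ (uwNsmul R k p).1 := by
  induction k with
  | zero => simp [uwNsmul]
  | succ k ih =>
    rcases uwNsmul_succ_fst_eq_or (R := R) k p with he | he <;> rw [he] <;> push_cast <;> linarith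

theorem uwNsmul_succ_fst_le (k : ℕ) (p : ℤ × G) :
    (uwNsmul R (k + 1) p).1 ≤ (k + 1) * p.1 + k := by
  induction k with
  | zero => simp [uwNsmul, uwAdd]
  | succ k ih =>
    rcases uwNsmul_succ_fst_eq_or (R := R) (k + 1) p with he | he <;> rw [he] <;> push_cast <;>
      linarith

theorem fst_eq_zero_of_uwNsmul_fst_eq_zero {n : ℕ} (hn : 0 < n) {p : ℤ × G}
    (hp : (uwNsmul R n p).1 = 0) : p.1 = 0 := by
  obtain ⟨k, rfl⟩ := Nat.exists_add_one_eq.mpr hn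
  have hge := mul_fst_le_uwNsmul_fst (R := R) (k + 1) p
  have hle := uwNsmul_succ_fst_le (R := R) k p
  push_cast at hge
  nlinarith

theorem monotone_uwNsmul_fst (a : G) : Monotone fun k => (uwNsmul R k ((0 : ℤ), a)).1 :=
  monotone_nat_of_le_succ fun k => by
    rcases uwNsmul_succ_fst_eq_or (R := R) k ((0 : ℤ), a) with he | he <;> simp only [he] <;> omega

theorem uwNsmul_fst_eq_zero_of_le {n k : ℕ} {a : G} (hn : (uwNsmul R n ((0 : ℤ), a)).1 = 0)
    (hkn : k ≤ n) : (uwNsmul R k ((0 : ℤ), a)).1 = 0 :=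
  le_antisymm ((monotone_uwNsmul_fst a hkn).trans_eq hn)
    (by simpa [uwNsmul] using monotone_uwNsmul_fst (R := R) a (Nat.zero_le k))

theorem rel_nsmul_nsmul_succ (h : IsCyclicOrder R) {n : ℕ} {a : G} (ha : a ≠ 0)
    (hn : (uwNsmul R n ((0 : ℤ), a)).1 = 0) {k : ℕ} (hk : 0 < k) (hkn : k < n) :
    R 0 (k • a) ((k + 1) • a) := by
  have no_carry : ∀ l < n, l • a ≠ 0 → R 0 (l • a) ((l + 1) • a) := by
    intro l hln hla
    have hfst : (uwNsmul R (l + 1) ((0 : ℤ), a)).1 = (uwNsmul R l ((0 : ℤ), a)).1 + 0 := by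
      rw [uwNsmul_fst_eq_zero_of_le hn hln, uwNsmul_fst_eq_zero_of_le hn hln.le, add_zero]
    have hcarry := uwAdd_no_carry hfst
    rw [uwNsmul_snd, ← succ_nsmul] at hcarry
    exact hcarry.resolve_left hla |>.resolve_left ha
  induction k, hk using Nat.le_induction with
  | base => exact no_carry 1 hkn (by rwa [one_nsmul])
  | succ k hk ih => exact no_carry (k + 1) hkn (h.strict _ _ _ (ih (by omega))).2.2

theorem rel_nsmul_nsmul (h : IsCyclicOrder R) {n : ℕ} {a : G} (ha : a ≠ 0)
    (hn : (uwNsmul R n ((0 : ℤ), a)).1 = 0) {i j : ℕ} (hi : 0 < i) (hij : i < j) (hjn : j ≤ n) :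
    R 0 (i • a) (j • a) :=
  h.rel_of_forall_rel_succ (y := fun k => k • a)
    (fun _ hik hkj => rel_nsmul_nsmul_succ h ha hn (by omega) (by omega)) hij

theorem fst_le_of_uwLt_or_eq {p q : ℤ × G} (hpq : uwLt R p q ∨ p = q) : p.1 ≤ q.1 := by
  rcases hpq with (hlt | ⟨he, -⟩ | ⟨he, -⟩) | rfl <;> omega

theorem uwLt_or_eq_iff {k : ℤ} {b c : G} (hb : b ≠ 0) :
    uwLt R (k, b) (k, c) ∨ ((k, b) : ℤ × G) = (k, c) ↔ R 0 b c ∨ b = c := by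
  simp [uwLt, hb]

theorem not_uwNRegular_zero : ¬ uwNRegular R 0 := by
  intro hreg
  obtain ⟨g, hg, -⟩ := hreg (fun _ => ((1 : ℤ), (0 : G))) (by simp)
  simp [uwNsmul, uwLt] at hg

end

theorem nregular_of_uw_nregular_general (G : Type*) [AddCommGroup G]
    (R : G → G → G → Prop) (h : IsCyclicOrder R) (n : ℕ)
    (huw : uwNRegular R n) :
    NRegularC R n := by
  obtain rfl | hn := Nat.eq_zero_or_pos n
  · exact absurd huw not_uwNRegular_zero
  intro x hx
  have hx1 : x 1 ≠ 0 := ne_zero_of_rchain_zero_neg h hn hx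
  obtain ⟨⟨m, a⟩, hlo, hhi⟩ := huw (fun i => ((0 : ℤ), x (i + 1))) fun i hi =>
    Or.inr <| Or.inl ⟨rfl, rel_zero_of_rchain_zero_neg h hx (by omega) (by omega) (by omega)⟩
  rw [Nat.sub_add_cancel hn] at hhi
  have hfst : (uwNsmul R n (m, a)).1 = 0 :=
    le_antisymm (fst_le_of_uwLt_or_eq hhi) (fst_le_of_uwLt_or_eq hlo)
  obtain rfl : m = 0 := fst_eq_zero_of_uwNsmul_fst_eq_zero hn hfst
  have hna : uwNsmul R n ((0 : ℤ), a) = ((0 : ℤ), n • a) := Prod.ext hfst (uwNsmul_snd n _)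
  rw [hna, uwLt_or_eq_iff hx1] at hlo
  have hna0 : n • a ≠ 0 := hlo.elim (fun hR => (h.strict _ _ _ hR).2.2) (· ▸ hx1)
  have ha : a ≠ 0 := by rintro rfl; exact hna0 (nsmul_zero n)
  rw [hna, uwLt_or_eq_iff hna0] at hhi
  exact ⟨a, h.rel_or_eq_or_eq_of_rel_or_eq hlo hhi,
    RChain.of_rel_nsmul h hn (fun _ _ hi hij hjn => rel_nsmul_nsmul h ha hfst hi hij hjn) hhi⟩

/-- If the unwound `uw(G)` is an `n`-regular linearly ordered group, then `G` is
`n`-regular. -/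
theorem nregular_of_uw_nregular (G : Type*) [AddCommGroup G]
    (R : G → G → G → Prop) (h : IsCyclicOrder R) (n : ℕ) (hn : 2 ≤ n)
    (huw : uwNRegular R n) :
    NRegularC R n :=
  nregular_of_uw_nregular_general G R h n huw
end

section
/- Let T be a discrete linearly ordered abelian group with least positive element 1_T and a distinguished positive cofinal element z_T, and assume that T/⟨1_T⟩ is divisible. Then: (1) for every prime p and every n ≥ 1, there exists exactly one k ∈ {0,…,p^n−1} such that there is x ∈ T with p^n·x = z_T + k·1_T; (2) if k ∈ {0,…,p^n−1} is such a number and k = a_0 + a_1 p + … + a_{n−1} p^{n−1} with each a_i ∈ {0,…,p−1}, then for every j ≤ n there exists x ∈ T with p^j·x = z_T + (a_0 + a_1 p + … + a_{j−1} p^{j−1})·1_T. -/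
/-! Divisibility of `T/⟨e⟩` gives `N • y = z + k • e` for some integer `k`, and moving
`(k / N) • e` into `y` reduces `k` to its residue mod `N`. The residue is unique because `e`
is the least positive element: if `N • d = m • e` with `|m| < N`, then `d ≠ 0` would give
`N • e ≤ N • |d| = |m| • e < N • e`. For the digits, the terms of index `≥ j` form a multiple
of `p ^ j`, which can again be moved into the `p ^ j`-th root. -/

section Discrete

variable {T : Type*} [AddCommGroup T] [LinearOrder T] [IsOrderedAddMonoid T] {e : T}

theorem eq_zero_of_nsmul_eq_zsmul_of_abs_lt (he : IsLeast {x : T | 0 < x} e) {N : ℕ} {m : ℤ}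
    {d : T} (hm : |m| < N) (hd : N • d = m • e) : m = 0 := by
  have habs : |m| • e = N • |d| := by
    rw [← abs_nsmul, hd, abs_zsmul, abs_of_pos he.1]
  rcases (abs_nonneg d).eq_or_lt with hd0 | hdpos
  · rw [← hd0, smul_zero] at habs
    by_contra hm0
    exact (zsmul_pos he.1 (abs_pos.mpr hm0)).ne' habs
  · have hle : N • e ≤ N • |d| := nsmul_le_nsmul_right (he.2 hdpos) N
    have hlt : |m| • e < (N : ℤ) • e := zsmul_lt_zsmul_left he.1 hm
    rw [natCast_zsmul] at hlt
    exact absurd (hle.trans_lt (habs ▸ hlt)) (lt_irrefl _)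

theorem eq_of_nsmul_eq_add_nsmul (he : IsLeast {x : T | 0 < x} e) {N k k' : ℕ} {z x x' : T}
    (hk : k < N) (hk' : k' < N) (hx : N • x = z + k • e) (hx' : N • x' = z + k' • e) :
    k = k' := by
  have hd : N • (x - x') = ((k : ℤ) - k') • e := by
    rw [nsmul_sub, hx, hx', sub_smul, natCast_zsmul, natCast_zsmul]
    abel
  have hm : |(k : ℤ) - k'| < N := by
    rw [abs_lt]
    constructor <;> omega
  have := eq_zero_of_nsmul_eq_zsmul_of_abs_lt he hm hd
  omega

end Discrete

theorem exists_nsmul_eq_add_nsmul_of_lt {T : Type*} [AddCommGroup T] {N : ℕ} (hN : 0 < N)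
    {x y e : T} {k : ℤ} (hy : N • y = x + k • e) :
    ∃ r : ℕ, r < N ∧ ∃ y' : T, N • y' = x + r • e := by
  have hNZ : (0 : ℤ) < N := by exact_mod_cast hN
  have hr : 0 ≤ k % N := Int.emod_nonneg k hNZ.ne'
  have hrN : k % N < N := Int.emod_lt_of_pos k hNZ
  refine ⟨(k % N).toNat, by omega, y - (k / N) • e, ?_⟩
  rw [← natCast_zsmul _ (k % N).toNat, Int.toNat_of_nonneg hr, Int.emod_def, sub_smul, nsmul_sub,
    ← natCast_zsmul ((k / N) • e), smul_smul, hy]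
  abel

theorem exists_nsmul_eq_add_nsmul_of_mul {T : Type*} [AddCommGroup T] {N M s r : ℕ} {x z e : T}
    (h : (N * M) • x = z + (s + N * r) • e) : ∃ y : T, N • y = z + s • e :=
  ⟨M • x - r • e, by rw [nsmul_sub, smul_smul, h, add_smul, smul_smul]; abel⟩

theorem Finset.sum_range_mul_pow_eq_add_pow_mul {R : Type*} [CommSemiring R] (a : ℕ → R)
    (p : R) {j n : ℕ} (hj : j ≤ n) :
    ∑ i ∈ range n, a i * p ^ i =
      ∑ i ∈ range j, a i * p ^ i + p ^ j * ∑ i ∈ range (n - j), a (j + i) * p ^ i := by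
  obtain ⟨m, rfl⟩ := Nat.exists_eq_add_of_le hj
  rw [Nat.add_sub_cancel_left, sum_range_add, mul_sum]
  congr 1
  refine sum_congr rfl fun i _ => ?_
  rw [pow_add]
  ring

theorem discrete_divisible_quotient_digits_general (T : Type*) [AddCommGroup T] [LinearOrder T] [IsOrderedAddMonoid T]
    (e z : T) (he : 0 < e ∧ ∀ x : T, 0 < x → e ≤ x)
    (hdiv : ∀ x : T, ∀ n : ℕ, 1 ≤ n → ∃ y : T, ∃ k : ℤ, n • y = x + k • e) :
    (∀ p : ℕ, p.Prime → ∀ n : ℕ, 1 ≤ n →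
      ∃! k : ℕ, k < p ^ n ∧ ∃ x : T, (p ^ n) • x = z + k • e) ∧
    (∀ p : ℕ, p.Prime → ∀ n : ℕ, 1 ≤ n → ∀ a : ℕ → ℕ, (∀ i : ℕ, i < n → a i < p) →
      (∃ x : T, (p ^ n) • x = z + (∑ i ∈ Finset.range n, a i * p ^ i) • e) →
      ∀ j : ℕ, j ≤ n →
        ∃ x : T, (p ^ j) • x = z + (∑ i ∈ Finset.range j, a i * p ^ i) • e) := by
  have hleast : IsLeast {x : T | 0 < x} e := ⟨he.1, fun x hx => he.2 x hx⟩
  refine ⟨fun p hp n _ => ?_, fun p _ n _ a _ ⟨x, hx⟩ j hj => ?_⟩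
  · have hN : 0 < p ^ n := pow_pos hp.pos n
    obtain ⟨y, k, hy⟩ := hdiv z (p ^ n) hN
    obtain ⟨r, hr, hr'⟩ := exists_nsmul_eq_add_nsmul_of_lt hN hy
    refine ⟨r, ⟨hr, hr'⟩, fun k' ⟨hk', x', hx'⟩ => ?_⟩
    obtain ⟨y', hy'⟩ := hr'
    exact eq_of_nsmul_eq_add_nsmul hleast hk' hr hx' hy'
  · rw [Finset.sum_range_mul_pow_eq_add_pow_mul _ _ hj, ← Nat.add_sub_cancel' hj, pow_add,
      Nat.add_sub_cancel_left] at hx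
    exact exists_nsmul_eq_add_nsmul_of_mul hx

/-- In a discrete linearly ordered abelian group `T` with least positive element `e`,
positive cofinal element `z`, and divisible quotient `T/⟨e⟩`:
(1) for every prime `p` and `n ≥ 1` there is exactly one `k < p^n` with
`z + k•e` divisible by `p^n`; and (2) if `k = a_0 + a_1 p + ⋯ + a_{n-1}p^{n-1}` is
such a number, then for every `j ≤ n`, `z + (a_0 + ⋯ + a_{j-1}p^{j-1})•e` is
divisible by `p^j`. -/
theorem discrete_divisible_quotient_digits (T : Type*) [AddCommGroup T] [LinearOrder T] [IsOrderedAddMonoid T]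
    (e z : T) (he : 0 < e ∧ ∀ x : T, 0 < x → e ≤ x) (hz : 0 < z)
    (hcof : ∀ t : T, ∃ m : ℕ, t ≤ m • z)
    (hdiv : ∀ x : T, ∀ n : ℕ, 1 ≤ n → ∃ y : T, ∃ k : ℤ, n • y = x + k • e) :
    (∀ p : ℕ, p.Prime → ∀ n : ℕ, 1 ≤ n →
      ∃! k : ℕ, k < p ^ n ∧ ∃ x : T, (p ^ n) • x = z + k • e) ∧
    (∀ p : ℕ, p.Prime → ∀ n : ℕ, 1 ≤ n → ∀ a : ℕ → ℕ, (∀ i : ℕ, i < n → a i < p) →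
      (∃ x : T, (p ^ n) • x = z + (∑ i ∈ Finset.range n, a i * p ^ i) • e) →
      ∀ j : ℕ, j ≤ n →
        ∃ x : T, (p ^ j) • x = z + (∑ i ∈ Finset.range j, a i * p ^ i) • e) :=
  discrete_divisible_quotient_digits_general T e z he hdiv
end

section
/- Let T_1 and T_2 be discrete linearly ordered abelian groups with least positive elements 1_{T_1}, 1_{T_2}, each containing a distinguished positive cofinal element z_1, z_2 respectively, and such that T_1/⟨1_{T_1}⟩ ≅ ℚ ≅ T_2/⟨1_{T_2}⟩ as groups. Then there exists an isomorphism of ordered groups from T_1 onto T_2 sending z_1 to z_2 if and only if for every prime p, every n ≥ 1 and every k ∈ {0,…,p^n−1}: (there exists x ∈ T_1 with p^n·x = z_1 + k·1_{T_1}) if and only if (there exists x ∈ T_2 with p^n·x = z_2 + k·1_{T_2}). -/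
/-!
The least positive element `e` is infinitely small compared with the cofinal `z` (otherwise
`T = ℤ e`), and a surjection `φ : T → ℚ` with kernel `ℤ e` and `φ z = 1` shows that every `t`
satisfies `b • t = a • z + m • e` for some `b > 0`; the sign of `t` is the lexicographic sign of
`(a, m)`. So `z₁ ↦ z₂`, `e₁ ↦ e₂` extends to an order isomorphism as soon as `a • z₁ + m • e₁` is
divisible by `b` in `T₁` exactly when `a • z₂ + m • e₂` is divisible by `b` in `T₂`. For fixed `b`
the `c` with `z + c • e` divisible by `b` form a single residue class modulo `b`, determined by its
residues modulo the prime powers dividing `b`; this reduces everything to the data in the theorem.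
-/

open AddSubgroup

section Order

variable {T : Type*} [AddCommGroup T] [LinearOrder T] [IsOrderedAddMonoid T]

theorem zmultiples_eq_top_of_isLeast {e : T} (he : IsLeast {x | 0 < x} e)
    (hcof : ∀ t : T, ∃ n : ℤ, t ≤ n • e) : zmultiples e = ⊤ := by
  have : Archimedean T := ⟨fun x y hy => by
    obtain ⟨n, hn⟩ := hcof x
    refine ⟨n.toNat, hn.trans ?_⟩
    calc n • e ≤ (n.toNat : ℤ) • e := zsmul_le_zsmul_left he.1.le (Int.self_le_toNat n)
      _ = n.toNat • e := natCast_zsmul _ _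
      _ ≤ n.toNat • y := nsmul_le_nsmul_right (he.2 hy) _⟩
  rw [zmultiples_eq_closure]
  exact (cyclic_of_min ⟨⟨mem_top e, he.1⟩, fun x hx => he.2 hx.2⟩).symm

theorem zsmul_lt_of_cofinal {e z : T} (he : IsLeast {x | 0 < x} e)
    (hc : ∀ t : T, ∃ m : ℕ, t ≤ m • z) (hq : Nonempty ((T ⧸ zmultiples e) ≃+ ℚ)) (k : ℤ) :
    k • e < z := by
  by_contra! hz
  obtain ⟨q⟩ := hq
  have htop : zmultiples e = ⊤ := zmultiples_eq_top_of_isLeast he fun t => by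
    obtain ⟨m, hm⟩ := hc t
    refine ⟨m * k, hm.trans ?_⟩
    rw [mul_zsmul, natCast_zsmul]
    exact nsmul_le_nsmul_right hz m
  have : Subsingleton (T ⧸ zmultiples e) := by
    rw [htop]
    exact QuotientAddGroup.subsingleton_quotient_top
  exact one_ne_zero (q.symm.injective (Subsingleton.elim _ _))

theorem zsmul_add_zsmul_pos_iff {e z : T} (he : 0 < e) (hez : ∀ k : ℤ, k • e < z) (a m : ℤ) :
    0 < a • z + m • e ↔ 0 < a ∨ a = 0 ∧ 0 < m := by
  have hz : 0 < z := by simpa using hez 0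
  have hle : ∀ n : ℤ, 0 < n → z ≤ n • z := fun n hn => by
    simpa using zsmul_le_zsmul_left hz.le (by omega : (1 : ℤ) ≤ n)
  rcases lt_trichotomy a 0 with ha | rfl | ha
  · have : a • z + m • e < 0 := by
      have := (hez m).trans_le (hle _ (neg_pos.mpr ha))
      rw [neg_zsmul, lt_neg_iff_add_neg'] at this
      exact this
    simp only [this.not_gt, false_iff]
    omega
  · simpa using zsmul_lt_zsmul_iff_left he (m := 0) (n := m)
  · have := (hez (-m)).trans_le (hle _ ha)
    rw [neg_zsmul] at this
    simp only [ha, true_or, iff_true]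
    exact neg_lt_iff_pos_add.mp this

theorem linearIndependent_of_forall_zsmul_lt {e z : T} (he : 0 < e) (hez : ∀ k : ℤ, k • e < z) :
    LinearIndependent ℤ ![z, e] := by
  refine LinearIndependent.pair_iff.mpr fun a m h => ?_
  have h₁ := (zsmul_add_zsmul_pos_iff he hez a m).not.mp (by rw [h]; exact lt_irrefl 0)
  have h₂ := (zsmul_add_zsmul_pos_iff he hez (-a) (-m)).not.mp
    (by rw [neg_zsmul, neg_zsmul, ← neg_add, h, neg_zero]; exact lt_irrefl 0)
  omega

end Order

theorem notMem_zmultiples_of_forall_zsmul_lt {T : Type*} [AddGroup T] [Preorder T] {e z : T}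
    (hez : ∀ k : ℤ, k • e < z) : z ∉ zmultiples e := by
  rintro ⟨k, rfl⟩
  exact (hez k).false

section RatQuotient

variable {T : Type*} [AddCommGroup T]

structure IsRatQuotientMap (φ : T →+ ℚ) (e z : T) : Prop where
  surjective : Function.Surjective φ
  ker_eq : φ.ker = zmultiples e
  map_z : φ z = 1

theorem exists_isRatQuotientMap {e z : T} (q : (T ⧸ zmultiples e) ≃+ ℚ)
    (hz : z ∉ zmultiples e) : ∃ φ : T →+ ℚ, IsRatQuotientMap φ e z := by
  set ψ : T →+ ℚ := q.toAddMonoidHom.comp (QuotientAddGroup.mk' _)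
  have hψ : ∀ t, ψ t = 0 ↔ t ∈ zmultiples e := fun t => by
    simp [ψ, QuotientAddGroup.eq_zero_iff]
  have hψz : ψ z ≠ 0 := (hψ z).not.mpr hz
  have hψs : Function.Surjective ψ := q.surjective.comp (QuotientAddGroup.mk'_surjective _)
  refine ⟨(AddMonoidHom.mulLeft (ψ z)⁻¹).comp ψ, ⟨fun r => ?_, ?_, ?_⟩⟩
  · obtain ⟨t, ht⟩ := hψs (ψ z * r)
    exact ⟨t, by simp [ht, hψz]⟩
  · ext t
    simp [hψz, hψ]
  · simp [hψz]

variable {φ : T →+ ℚ} {e z : T}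

theorem IsRatQuotientMap.exists_pos_zsmul_eq (hφ : IsRatQuotientMap φ e z) (t : T) :
    ∃ b a m : ℤ, 0 < b ∧ b • t = a • z + m • e := by
  have hker : ((φ t).den : ℤ) • t - (φ t).num • z ∈ φ.ker := by
    simp [hφ.map_z, Rat.den_mul_eq_num]
  rw [hφ.ker_eq, mem_zmultiples_iff] at hker
  obtain ⟨m, hm⟩ := hker
  exact ⟨(φ t).den, (φ t).num, m, by exact_mod_cast (φ t).pos, by rw [hm]; abel⟩

theorem IsRatQuotientMap.exists_zsmul_eq_add_zsmul (hφ : IsRatQuotientMap φ e z) {b : ℤ}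
    (hb : b ≠ 0) : ∃ x : T, ∃ c : ℤ, b • x = z + c • e := by
  obtain ⟨x, hx⟩ := hφ.surjective (b : ℚ)⁻¹
  have hker : b • x - z ∈ φ.ker := by
    simp [hφ.map_z, hx, hb]
  rw [hφ.ker_eq, mem_zmultiples_iff] at hker
  obtain ⟨c, hc⟩ := hker
  exact ⟨x, c, by rw [hc]; abel⟩

theorem IsRatQuotientMap.dvd_of_zsmul_eq_zsmul [IsAddTorsionFree T] (hφ : IsRatQuotientMap φ e z)
    (he : e ≠ 0) {b m : ℤ} (hb : b ≠ 0) {y : T} (h : b • y = m • e) : b ∣ m := by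
  have he' : e ∈ φ.ker := hφ.ker_eq ▸ mem_zmultiples e
  have hy : y ∈ φ.ker := by
    have := congrArg φ h
    rw [map_zsmul, map_zsmul, he', smul_zero, zsmul_eq_mul] at this
    exact (mul_eq_zero.mp this).resolve_left (by exact_mod_cast hb)
  rw [hφ.ker_eq, mem_zmultiples_iff] at hy
  obtain ⟨s, rfl⟩ := hy
  rw [smul_smul] at h
  exact ⟨s, (smul_left_injective ℤ he h).symm⟩

end RatQuotient

theorem exists_zsmul_eq_add_zsmul_congr {T : Type*} [AddCommGroup T] {N c c' : ℤ}
    (h : c ≡ c' [ZMOD N]) (z e : T) :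
    (∃ x : T, N • x = z + c • e) ↔ ∃ x : T, N • x = z + c' • e := by
  have key : ∀ {c c' : ℤ}, c ≡ c' [ZMOD N] → (∃ x : T, N • x = z + c • e) →
      ∃ x : T, N • x = z + c' • e := by
    rintro c c' h ⟨x, hx⟩
    obtain ⟨d, hd⟩ := h.dvd
    exact ⟨x + d • e, by linear_combination (norm := module) hx - hd • e⟩
  exact ⟨key h, key h.symm⟩

section Transfer

variable {T₁ T₂ : Type*} [AddCommGroup T₁] [AddCommGroup T₂] {e₁ z₁ : T₁} {e₂ z₂ : T₂}

theorem forall_isPrimePow_of_forall_prime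
    (hDD : ∀ p : ℕ, p.Prime → ∀ n : ℕ, 1 ≤ n → ∀ k : ℕ, k < p ^ n →
      (∃ x : T₁, (p ^ n) • x = z₁ + k • e₁) → ∃ x : T₂, (p ^ n) • x = z₂ + k • e₂)
    {q : ℕ} (hq : IsPrimePow q) {c : ℤ} (h : ∃ x : T₁, (q : ℤ) • x = z₁ + c • e₁) :
    ∃ x : T₂, (q : ℤ) • x = z₂ + c • e₂ := by
  obtain ⟨p, n, hp, hn, rfl⟩ := hq
  have hp : p.Prime := Nat.prime_iff.mpr hp
  have hq0 : (0 : ℤ) < (p ^ n : ℕ) := by exact_mod_cast pow_pos hp.pos n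
  set k := (c % (p ^ n : ℕ)).toNat
  have hk : (k : ℤ) = c % (p ^ n : ℕ) := Int.toNat_of_nonneg (Int.emod_nonneg _ hq0.ne')
  have hkc : (k : ℤ) ≡ c [ZMOD (p ^ n : ℕ)] := hk ▸ Int.mod_modEq _ _
  have hkq : k < p ^ n := by have := Int.emod_lt_of_pos c hq0; omega
  rw [← exists_zsmul_eq_add_zsmul_congr hkc] at h ⊢
  simp only [natCast_zsmul] at h ⊢
  exact hDD p hp n hn k hkq h

theorem IsRatQuotientMap.dvd_sub_of_forall_isPrimePow [IsAddTorsionFree T₂] {φ₂ : T₂ →+ ℚ}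
    (hφ₂ : IsRatQuotientMap φ₂ e₂ z₂) (he₂ : e₂ ≠ 0)
    (hpp : ∀ {q : ℕ}, IsPrimePow q → ∀ {c : ℤ}, (∃ x : T₁, (q : ℤ) • x = z₁ + c • e₁) →
      ∃ x : T₂, (q : ℤ) • x = z₂ + c • e₂)
    {b c₁ c₂ : ℤ} (h₁ : ∃ x : T₁, b • x = z₁ + c₁ • e₁) (h₂ : ∃ x : T₂, b • x = z₂ + c₂ • e₂) :
    b ∣ c₁ - c₂ := by
  rw [← Int.natAbs_dvd_natAbs, Nat.dvd_iff_prime_pow_dvd_dvd]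
  intro p k hp hpk
  rcases k.eq_zero_or_pos with rfl | hk
  · simp
  obtain ⟨d, hd⟩ : ((p ^ k : ℕ) : ℤ) ∣ b := Int.natCast_dvd.mpr hpk
  obtain ⟨x₁, hx₁⟩ := h₁
  obtain ⟨x₂, hx₂⟩ := h₂
  obtain ⟨y, hy⟩ := hpp (hp.isPrimePow.pow hk.ne') ⟨d • x₁, by rw [smul_smul, ← hd, hx₁]⟩
  have hq : ((p ^ k : ℕ) : ℤ) ≠ 0 := by exact_mod_cast (pow_pos hp.pos k).ne'
  exact Int.natCast_dvd.mp <| hφ₂.dvd_of_zsmul_eq_zsmul he₂ hq (y := y - d • x₂)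
    (by linear_combination (norm := module) hy - hx₂ + hd • x₂)

theorem exists_zsmul_eq_of_forall_isPrimePow [IsAddTorsionFree T₁] [IsAddTorsionFree T₂]
    {φ₁ : T₁ →+ ℚ} {φ₂ : T₂ →+ ℚ} (hφ₁ : IsRatQuotientMap φ₁ e₁ z₁)
    (hφ₂ : IsRatQuotientMap φ₂ e₂ z₂) (he₁ : e₁ ≠ 0) (he₂ : e₂ ≠ 0)
    (hpp : ∀ {q : ℕ}, IsPrimePow q → ∀ {c : ℤ}, (∃ x : T₁, (q : ℤ) • x = z₁ + c • e₁) →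
      ∃ x : T₂, (q : ℤ) • x = z₂ + c • e₂)
    {b a m : ℤ} (hb : b ≠ 0) (h : ∃ x : T₁, b • x = a • z₁ + m • e₁) :
    ∃ y : T₂, b • y = a • z₂ + m • e₂ := by
  obtain ⟨x, hx⟩ := h
  obtain ⟨x₁, c₁, hx₁⟩ := hφ₁.exists_zsmul_eq_add_zsmul hb
  obtain ⟨x₂, c₂, hx₂⟩ := hφ₂.exists_zsmul_eq_add_zsmul hb
  have hc : b ∣ c₁ - c₂ := hφ₂.dvd_sub_of_forall_isPrimePow he₂ hpp ⟨x₁, hx₁⟩ ⟨x₂, hx₂⟩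
  have hm : b ∣ m - a * c₁ := hφ₁.dvd_of_zsmul_eq_zsmul he₁ hb (y := x - a • x₁)
    (by linear_combination (norm := module) hx - a • hx₁)
  obtain ⟨s, hs⟩ : b ∣ m - a * c₂ := by
    rw [show m - a * c₂ = m - a * c₁ + a * (c₁ - c₂) by ring]
    exact dvd_add hm (hc.mul_left a)
  exact ⟨a • x₂ + s • e₂, by linear_combination (norm := module) a • hx₂ - hs • e₂⟩

end Transfer

theorem exists_addEquiv_of_rel {A B : Type*} [AddGroup A] [AddGroup B] {R : A → B → Prop}
    (hadd : ∀ {a a' b b'}, R a b → R a' b' → R (a + a') (b + b'))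
    (hfun : ∀ {a b b'}, R a b → R a b' → b = b') (hinj : ∀ {a a' b}, R a b → R a' b → a = a')
    (htot : ∀ a, ∃ b, R a b) (hsurj : ∀ b, ∃ a, R a b) : ∃ f : A ≃+ B, ∀ a, R a (f a) := by
  choose f hf using htot
  let F : A →+ B := AddMonoidHom.mk' f fun a a' => hfun (hf (a + a')) (hadd (hf a) (hf a'))
  have hF : Function.Injective F := fun a a' h => hinj (hf a) ((congrArg (R a') h).mpr (hf a'))
  refine ⟨AddEquiv.ofBijective F ⟨hF, fun b => ?_⟩, hf⟩
  obtain ⟨a, ha⟩ := hsurj b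
  exact ⟨a, hfun (hf a) ha⟩

section Coordinates

variable {T₁ T₂ : Type*} [AddCommGroup T₁] [AddCommGroup T₂]

/-- `t` and `y` have the same coordinates in the bases `(z₁, e₁)` and `(z₂, e₂)` of `T₁ ⊗ ℚ` and
`T₂ ⊗ ℚ`; this relation is the graph of the isomorphism. -/
def SameCoords (z₁ e₁ : T₁) (z₂ e₂ : T₂) (t : T₁) (y : T₂) : Prop :=
  ∃ b a m : ℤ, 0 < b ∧ b • t = a • z₁ + m • e₁ ∧ b • y = a • z₂ + m • e₂

namespace SameCoords

variable {e₁ z₁ t t' : T₁} {e₂ z₂ y y' : T₂}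

theorem symm (h : SameCoords z₁ e₁ z₂ e₂ t y) : SameCoords z₂ e₂ z₁ e₁ y t :=
  let ⟨b, a, m, hb, ht, hy⟩ := h
  ⟨b, a, m, hb, hy, ht⟩

theorem add (h : SameCoords z₁ e₁ z₂ e₂ t y) (h' : SameCoords z₁ e₁ z₂ e₂ t' y') :
    SameCoords z₁ e₁ z₂ e₂ (t + t') (y + y') := by
  obtain ⟨b, a, m, hb, ht, hy⟩ := h
  obtain ⟨b', a', m', hb', ht', hy'⟩ := h'
  refine ⟨b * b', b' * a + b * a', b' * m + b * m', mul_pos hb hb', ?_, ?_⟩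
  · linear_combination (norm := module) b' • ht + b • ht'
  · linear_combination (norm := module) b' • hy + b • hy'

theorem unique [IsAddTorsionFree T₂] (hind : LinearIndependent ℤ ![z₁, e₁])
    (h : SameCoords z₁ e₁ z₂ e₂ t y) (h' : SameCoords z₁ e₁ z₂ e₂ t y') : y = y' := by
  obtain ⟨b, a, m, hb, ht, hy⟩ := h
  obtain ⟨b', a', m', hb', ht', hy'⟩ := h'
  obtain ⟨ha, hm⟩ := LinearIndependent.pair_iff.mp hind (b' * a - b * a') (b' * m - b * m')
    (by linear_combination (norm := module) b • ht' - b' • ht)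
  exact zsmul_right_injective (mul_pos hb hb').ne'
    (by linear_combination (norm := module) b' • hy - b • hy' + ha • z₂ + hm • e₂ :
      (b * b') • y = (b * b') • y')

theorem exists_right [IsAddTorsionFree T₁] [IsAddTorsionFree T₂] {φ₁ : T₁ →+ ℚ}
    {φ₂ : T₂ →+ ℚ} (hφ₁ : IsRatQuotientMap φ₁ e₁ z₁) (hφ₂ : IsRatQuotientMap φ₂ e₂ z₂)
    (he₁ : e₁ ≠ 0) (he₂ : e₂ ≠ 0)
    (hpp : ∀ {q : ℕ}, IsPrimePow q → ∀ {c : ℤ}, (∃ x : T₁, (q : ℤ) • x = z₁ + c • e₁) →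
      ∃ x : T₂, (q : ℤ) • x = z₂ + c • e₂) (t : T₁) :
    ∃ y, SameCoords z₁ e₁ z₂ e₂ t y := by
  obtain ⟨b, a, m, hb, ht⟩ := hφ₁.exists_pos_zsmul_eq t
  obtain ⟨y, hy⟩ := exists_zsmul_eq_of_forall_isPrimePow hφ₁ hφ₂ he₁ he₂ hpp hb.ne' ⟨t, ht⟩
  exact ⟨y, b, a, m, hb, ht, hy⟩

end SameCoords

end Coordinates

theorem SameCoords.pos_iff {T₁ T₂ : Type*}
    [AddCommGroup T₁] [LinearOrder T₁] [IsOrderedAddMonoid T₁]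
    [AddCommGroup T₂] [LinearOrder T₂] [IsOrderedAddMonoid T₂] {e₁ z₁ t : T₁} {e₂ z₂ y : T₂}
    (he₁ : 0 < e₁) (hez₁ : ∀ k : ℤ, k • e₁ < z₁) (he₂ : 0 < e₂) (hez₂ : ∀ k : ℤ, k • e₂ < z₂)
    (h : SameCoords z₁ e₁ z₂ e₂ t y) : 0 < t ↔ 0 < y := by
  obtain ⟨b, a, m, hb, ht, hy⟩ := h
  calc 0 < t ↔ 0 < b • t := by simpa using (zsmul_lt_zsmul_iff_right hb (a := 0) (b := t)).symm
    _ ↔ 0 < a ∨ a = 0 ∧ 0 < m := by rw [ht, zsmul_add_zsmul_pos_iff he₁ hez₁]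
    _ ↔ 0 < b • y := by rw [hy, zsmul_add_zsmul_pos_iff he₂ hez₂]
    _ ↔ 0 < y := by simpa using zsmul_lt_zsmul_iff_right hb (a := 0) (b := y)

theorem exists_strictMono_addEquiv {T₁ T₂ : Type*}
    [AddCommGroup T₁] [LinearOrder T₁] [IsOrderedAddMonoid T₁]
    [AddCommGroup T₂] [LinearOrder T₂] [IsOrderedAddMonoid T₂] {e₁ z₁ : T₁} {e₂ z₂ : T₂}
    {φ₁ : T₁ →+ ℚ} {φ₂ : T₂ →+ ℚ} (hφ₁ : IsRatQuotientMap φ₁ e₁ z₁)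
    (hφ₂ : IsRatQuotientMap φ₂ e₂ z₂) (he₁ : 0 < e₁) (he₂ : 0 < e₂)
    (hez₁ : ∀ k : ℤ, k • e₁ < z₁) (hez₂ : ∀ k : ℤ, k • e₂ < z₂)
    (hpp₁₂ : ∀ {q : ℕ}, IsPrimePow q → ∀ {c : ℤ}, (∃ x : T₁, (q : ℤ) • x = z₁ + c • e₁) →
      ∃ x : T₂, (q : ℤ) • x = z₂ + c • e₂)
    (hpp₂₁ : ∀ {q : ℕ}, IsPrimePow q → ∀ {c : ℤ}, (∃ x : T₂, (q : ℤ) • x = z₂ + c • e₂) →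
      ∃ x : T₁, (q : ℤ) • x = z₁ + c • e₁) :
    ∃ f : T₁ ≃+ T₂, StrictMono f ∧ f z₁ = z₂ := by
  have hind₁ := linearIndependent_of_forall_zsmul_lt he₁ hez₁
  have hind₂ := linearIndependent_of_forall_zsmul_lt he₂ hez₂
  obtain ⟨f, hf⟩ := exists_addEquiv_of_rel (R := SameCoords z₁ e₁ z₂ e₂) SameCoords.add
    (SameCoords.unique hind₁) (fun h h' => SameCoords.unique hind₂ h.symm h'.symm)
    (SameCoords.exists_right hφ₁ hφ₂ he₁.ne' he₂.ne' hpp₁₂)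
    (fun y => (SameCoords.exists_right hφ₂ hφ₁ he₂.ne' he₁.ne' hpp₂₁ y).imp
      fun _ h => h.symm)
  refine ⟨f, (strictMono_iff_map_pos _).mpr fun t => ((hf t).pos_iff he₁ hez₁ he₂ hez₂).mp, ?_⟩
  exact (SameCoords.unique hind₁ ⟨1, 1, 0, one_pos, by simp, by simp⟩ (hf z₁)).symm

theorem AddEquiv.apply_eq_of_isLeast_pos {A B : Type*} [AddMonoid A] [LinearOrder A]
    [AddMonoid B] [LinearOrder B] {f : A ≃+ B} (hf : StrictMono f) {e : A} {e' : B}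
    (he : IsLeast {x | 0 < x} e) (he' : IsLeast {x | 0 < x} e') : f e = e' := by
  have hpos : ∀ x, 0 < f x ↔ 0 < x := fun x => by simpa using hf.lt_iff_lt (a := 0) (b := x)
  apply le_antisymm
  · obtain ⟨x, rfl⟩ := f.surjective e'
    exact hf.monotone (he.2 ((hpos x).mp he'.1))
  · exact he'.2 ((hpos e).mpr he.1)

theorem AddEquiv.exists_nsmul_eq_iff {A B : Type*} [AddMonoid A] [AddMonoid B] (f : A ≃+ B)
    (n : ℕ) (t : A) : (∃ x, n • x = t) ↔ ∃ y, n • y = f t := by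
  constructor
  · rintro ⟨x, rfl⟩
    exact ⟨f x, (map_nsmul f n x).symm⟩
  · rintro ⟨y, hy⟩
    exact ⟨f.symm y, f.injective (by rw [map_nsmul, f.apply_symm_apply, hy])⟩

theorem discrete_iso_iff_same_DD_general (T₁ T₂ : Type*)
    [AddCommGroup T₁] [LinearOrder T₁] [IsOrderedAddMonoid T₁]
    [AddCommGroup T₂] [LinearOrder T₂] [IsOrderedAddMonoid T₂]
    (e₁ z₁ : T₁) (e₂ z₂ : T₂)
    (he₁ : 0 < e₁ ∧ ∀ x : T₁, 0 < x → e₁ ≤ x)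
    (he₂ : 0 < e₂ ∧ ∀ x : T₂, 0 < x → e₂ ≤ x)
    (hc₁ : ∀ t : T₁, ∃ m : ℕ, t ≤ m • z₁)
    (hc₂ : ∀ t : T₂, ∃ m : ℕ, t ≤ m • z₂)
    (hq₁ : Nonempty ((T₁ ⧸ AddSubgroup.zmultiples e₁) ≃+ ℚ))
    (hq₂ : Nonempty ((T₂ ⧸ AddSubgroup.zmultiples e₂) ≃+ ℚ)) :
    (∃ f : T₁ ≃+ T₂, StrictMono f ∧ f z₁ = z₂) ↔
      (∀ p : ℕ, p.Prime → ∀ n : ℕ, 1 ≤ n → ∀ k : ℕ, k < p ^ n →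
        ((∃ x : T₁, (p ^ n) • x = z₁ + k • e₁) ↔
         (∃ x : T₂, (p ^ n) • x = z₂ + k • e₂))) := by
  constructor
  · rintro ⟨f, hf, hfz⟩ p - n - k -
    rw [f.exists_nsmul_eq_iff, map_add, map_nsmul, hfz, f.apply_eq_of_isLeast_pos hf he₁ he₂]
  · intro hDD
    have hez₁ := zsmul_lt_of_cofinal he₁ hc₁ hq₁
    have hez₂ := zsmul_lt_of_cofinal he₂ hc₂ hq₂
    obtain ⟨φ₁, hφ₁⟩ :=
      exists_isRatQuotientMap hq₁.some (notMem_zmultiples_of_forall_zsmul_lt hez₁)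
    obtain ⟨φ₂, hφ₂⟩ :=
      exists_isRatQuotientMap hq₂.some (notMem_zmultiples_of_forall_zsmul_lt hez₂)
    exact exists_strictMono_addEquiv hφ₁ hφ₂ he₁.1 he₂.1 hez₁ hez₂
      (forall_isPrimePow_of_forall_prime fun p hp n hn k hk => (hDD p hp n hn k hk).1)
      (forall_isPrimePow_of_forall_prime fun p hp n hn k hk => (hDD p hp n hn k hk).2)

/-- Two discrete linearly ordered abelian groups with distinguished positive cofinal
elements, whose quotients by the least positive elements are isomorphic to `ℚ`, are
isomorphic (as ordered groups with distinguished element) iff `z_i + k•1_{T_i}` is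
divisible by `p^n` in `T_1` exactly when it is in `T_2`, for all primes `p`, `n ≥ 1`
and `k < p^n`. -/
theorem discrete_iso_iff_same_DD (T₁ T₂ : Type*)
    [AddCommGroup T₁] [LinearOrder T₁] [IsOrderedAddMonoid T₁]
    [AddCommGroup T₂] [LinearOrder T₂] [IsOrderedAddMonoid T₂]
    (e₁ z₁ : T₁) (e₂ z₂ : T₂)
    (he₁ : 0 < e₁ ∧ ∀ x : T₁, 0 < x → e₁ ≤ x)
    (he₂ : 0 < e₂ ∧ ∀ x : T₂, 0 < x → e₂ ≤ x)
    (hz₁ : 0 < z₁) (hc₁ : ∀ t : T₁, ∃ m : ℕ, t ≤ m • z₁)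
    (hz₂ : 0 < z₂) (hc₂ : ∀ t : T₂, ∃ m : ℕ, t ≤ m • z₂)
    (hq₁ : Nonempty ((T₁ ⧸ AddSubgroup.zmultiples e₁) ≃+ ℚ))
    (hq₂ : Nonempty ((T₂ ⧸ AddSubgroup.zmultiples e₂) ≃+ ℚ)) :
    (∃ f : T₁ ≃+ T₂, StrictMono f ∧ f z₁ = z₂) ↔
      (∀ p : ℕ, p.Prime → ∀ n : ℕ, 1 ≤ n → ∀ k : ℕ, k < p ^ n →
        ((∃ x : T₁, (p ^ n) • x = z₁ + k • e₁) ↔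
         (∃ x : T₂, (p ^ n) • x = z₂ + k • e₂))) :=
  discrete_iso_iff_same_DD_general T₁ T₂ e₁ z₁ e₂ z₂ he₁ he₂ hc₁ hc₂ hq₁ hq₂
end

section
/- (1) For every ultrafilter U on ℕ∖{0} there exists one and only one family (φ_p)_{p prime} of maps φ_p : ℕ∖{0} → {0,…,p−1} such that U contains the set N_{p^n,φ_p} = { p^n·m − (Σ_{k=1}^n p^{k−1}·φ_p(k)) : m ∈ ℕ∖{0} } for every prime p and every n ≥ 1. (2) Conversely, for every family (φ_p)_{p prime} of maps φ_p : ℕ∖{0} → {0,…,p−1} there exists a non-principal ultrafilter U on ℕ∖{0} containing all the sets N_{p^n,φ_p}. -/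
/-- The subset `N_{p^n, φ_p} = {p^n·m - (φ_p(1) + φ_p(2)p + ⋯ + φ_p(n)p^{n-1}) : m ≥ 1}`
of the positive integers, where `s` denotes the subtracted sum. -/
def NSet (p n s : ℕ) : Set ℕ+ :=
  {x : ℕ+ | ∃ m : ℕ+, (x : ℕ) + s = p ^ n * (m : ℕ)}

/-- The characteristic sum `φ_p(1) + φ_p(2)p + ⋯ + φ_p(n)p^{n-1}`. -/
def charSum (φ : ℕ → ℕ → ℕ) (p n : ℕ) : ℕ :=
  ∑ k ∈ Finset.range n, p ^ k * φ p (k + 1)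

/-!
An ultrafilter picks exactly one residue class modulo each `p ^ n`, since these finitely many
classes cover `ℕ+`. The classes chosen for `p ^ n` and `p ^ (n + 1)` are compatible, so the
base-`p` digits of their least representatives define `φ_p`; it is unique because the digits
determine those representatives. Conversely, by the Chinese remainder theorem there is for each
`J` some `b J > J` lying in `N_{p^J,φ_p}` for all primes `p ≤ J`; as these sets decrease in `J`,
any ultrafilter finer than the image of `atTop` under `b` contains every `N_{p^n,φ_p}` and no
finite set.
-/

open Filter Function

section NSet

variable {p n m s t : ℕ}

lemma mem_NSet_iff {x : ℕ+} : x ∈ NSet p n s ↔ p ^ n ∣ (x : ℕ) + s := by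
  refine ⟨fun ⟨m, hm⟩ => ⟨m, hm⟩, fun ⟨k, hk⟩ => ?_⟩
  have hk0 : 0 < k := Nat.pos_of_ne_zero (by rintro rfl; simp at hk)
  exact ⟨⟨k, hk0⟩, hk⟩

lemma NSet_subset_NSet (h : n ≤ m) : NSet p m s ⊆ NSet p n s := fun _ hx =>
  mem_NSet_iff.2 <| (pow_dvd_pow p h).trans (mem_NSet_iff.1 hx)

lemma NSet_congr (h : s ≡ t [MOD p ^ n]) : NSet p n s = NSet p n t :=
  Set.ext fun x => by simp only [mem_NSet_iff]; exact (h.add_left x).dvd_iff dvd_rfl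

lemma modEq_of_NSet_mem {F : Filter ℕ+} [F.NeBot] (hs : NSet p n s ∈ F) (ht : NSet p n t ∈ F) :
    s ≡ t [MOD p ^ n] := by
  obtain ⟨x, hxs, hxt⟩ := nonempty_of_mem (inter_mem hs ht)
  have hxs' := Nat.modEq_zero_iff_dvd.2 (mem_NSet_iff.1 hxs)
  have hxt' := Nat.modEq_zero_iff_dvd.2 (mem_NSet_iff.1 hxt)
  exact Nat.ModEq.add_left_cancel' x (hxs'.trans hxt'.symm)

-- `x` lies in `NSet p n ((p ^ n - 1) * x)`, so these finitely many classes cover `ℕ+`.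
lemma exists_NSet_mem (U : Ultrafilter ℕ+) (hp : 0 < p) : ∃ t < p ^ n, NSet p n t ∈ U := by
  have hM : 0 < p ^ n := pow_pos hp n
  have hcover : ⋃ t ∈ Set.Iio (p ^ n), NSet p n t = Set.univ := by
    refine Set.eq_univ_of_forall fun x => Set.mem_biUnion (Nat.mod_lt ((p ^ n - 1) * x) hM) ?_
    rw [NSet_congr (Nat.mod_modEq _ _)]
    refine ⟨x, ?_⟩
    zify [Nat.one_le_iff_ne_zero.2 hM.ne']
    ring
  obtain ⟨t, ht, htU⟩ := (Ultrafilter.finite_biUnion_mem_iff (f := U) (Set.finite_Iio (p ^ n))).1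
    (hcover ▸ univ_mem)
  exact ⟨t, ht, htU⟩

end NSet

section charSum

variable {φ ψ : ℕ → ℕ → ℕ} {p : ℕ}

lemma charSum_succ (n : ℕ) : charSum φ p (n + 1) = charSum φ p n + p ^ n * φ p (n + 1) :=
  Finset.sum_range_succ _ n

lemma charSum_lt (hφ : ∀ k, 1 ≤ k → φ p k < p) (n : ℕ) : charSum φ p n < p ^ n := by
  induction n with
  | zero => simp [charSum]
  | succ n ih =>
    calc charSum φ p (n + 1) = charSum φ p n + p ^ n * φ p (n + 1) := charSum_succ n
      _ < p ^ n * (φ p (n + 1) + 1) := by rw [mul_add_one]; omega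
      _ ≤ p ^ n * p := Nat.mul_le_mul_left _ (hφ (n + 1) n.succ_pos)
      _ = p ^ (n + 1) := (pow_succ p n).symm

lemma charSum_modEq {n m : ℕ} (h : n ≤ m) : charSum φ p m ≡ charSum φ p n [MOD p ^ n] := by
  obtain ⟨k, rfl⟩ := Nat.exists_eq_add_of_le h
  have hdvd : p ^ n ∣ ∑ i ∈ Finset.range k, p ^ (n + i) * φ p (n + i + 1) :=
    Finset.dvd_sum fun i _ => (pow_dvd_pow p (n.le_add_right i)).mul_right _
  obtain ⟨c, hc⟩ := hdvd
  rw [charSum, Finset.sum_range_add, ← charSum, hc]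
  exact Nat.add_mul_mod_self_left _ _ _

lemma NSet_charSum_subset {n m : ℕ} (h : n ≤ m) :
    NSet p m (charSum φ p m) ⊆ NSet p n (charSum φ p n) := by
  rw [← NSet_congr (charSum_modEq h)]
  exact NSet_subset_NSet h

lemma charSum_eq_of_mod_eq {s : ℕ → ℕ} (h0 : s 0 = 0) (hs : ∀ n, s (n + 1) % p ^ n = s n)
    (hφ : ∀ n, φ p (n + 1) = s (n + 1) / p ^ n) (n : ℕ) : charSum φ p n = s n := by
  induction n with
  | zero => simp [charSum, h0]
  | succ n ih => rw [charSum_succ, ih, hφ, ← hs n, Nat.mod_add_div]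

lemma eq_of_charSum_eq (hp : 0 < p) (h : ∀ n, charSum φ p n = charSum ψ p n) {k : ℕ}
    (hk : 1 ≤ k) : φ p k = ψ p k := by
  obtain ⟨j, rfl⟩ := Nat.exists_eq_add_of_le' hk
  have := h (j + 1)
  rw [charSum_succ, charSum_succ, h j, Nat.add_left_cancel_iff] at this
  exact Nat.eq_of_mul_eq_mul_left (pow_pos hp j) this

end charSum

theorem Ultrafilter.exists_charSum_NSet_mem (U : Ultrafilter ℕ+) :
    ∃ φ : ℕ → ℕ → ℕ, (∀ p : ℕ, p.Prime → ∀ k : ℕ, 1 ≤ k → φ p k < p) ∧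
      ∀ p n : ℕ, p.Prime → NSet p n (charSum φ p n) ∈ U := by
  have hres : ∀ p n : ℕ, ∃ t, p.Prime → t < p ^ n ∧ NSet p n t ∈ U := by
    intro p n
    by_cases hp : p.Prime
    · obtain ⟨t, ht, htU⟩ := exists_NSet_mem U (n := n) hp.pos
      exact ⟨t, fun _ => ⟨ht, htU⟩⟩
    · exact ⟨0, fun h => absurd h hp⟩
  choose t ht using hres
  have hcompat (p : ℕ) (hp : p.Prime) (n : ℕ) : t p (n + 1) % p ^ n = t p n := by
    have := modEq_of_NSet_mem (U.mem_of_superset (ht p (n + 1) hp).2 (NSet_subset_NSet n.le_succ))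
      (ht p n hp).2
    rwa [Nat.ModEq, Nat.mod_eq_of_lt (ht p n hp).1] at this
  have hsum (p : ℕ) (hp : p.Prime) (n : ℕ) :
      charSum (fun p k => t p k / p ^ (k - 1)) p n = t p n :=
    charSum_eq_of_mod_eq (Nat.lt_one_iff.1 (ht p 0 hp).1) (hcompat p hp) (fun _ => rfl) n
  refine ⟨fun p k => t p k / p ^ (k - 1), fun p hp k hk => ?_, fun p n hp => ?_⟩
  · obtain ⟨j, rfl⟩ := Nat.exists_eq_add_of_le' hk
    exact Nat.div_lt_of_lt_mul ((ht p (j + 1) hp).1.trans_eq (pow_succ p j))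
  · rw [hsum p hp]
    exact (ht p n hp).2

theorem eq_of_charSum_NSet_mem {F : Filter ℕ+} [F.NeBot] {φ ψ : ℕ → ℕ → ℕ} {p : ℕ} (hp : 0 < p)
    (hφ : ∀ k, 1 ≤ k → φ p k < p) (hψ : ∀ k, 1 ≤ k → ψ p k < p)
    (hφF : ∀ n, 1 ≤ n → NSet p n (charSum φ p n) ∈ F)
    (hψF : ∀ n, 1 ≤ n → NSet p n (charSum ψ p n) ∈ F) {k : ℕ} (hk : 1 ≤ k) :
    φ p k = ψ p k := by
  refine eq_of_charSum_eq hp (fun n => ?_) hk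
  rcases n.eq_zero_or_pos with rfl | hn
  · simp [charSum]
  · exact (modEq_of_NSet_mem (hφF n hn) (hψF n hn)).eq_of_lt_of_lt (charSum_lt hφ n)
      (charSum_lt hψ n)

lemma exists_gt_forall_dvd_add {ι : Type*} (t : Finset ι) {m : ι → ℕ} (hm : ∀ i ∈ t, m i ≠ 0)
    (hcop : (t : Set ι).Pairwise (Nat.Coprime on m)) (a : ι → ℕ) (N : ℕ) :
    ∃ x, N < x ∧ ∀ i ∈ t, m i ∣ x + a i := by
  obtain ⟨x, hx⟩ := Nat.chineseRemainderOfFinset (fun i => (m i - 1) * a i) m t hm hcop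
  have hP : 0 < ∏ i ∈ t, m i := Finset.prod_pos fun i hi => Nat.pos_of_ne_zero (hm i hi)
  refine ⟨x + (N + 1) * ∏ i ∈ t, m i, by nlinarith, fun i hi => ?_⟩
  -- `x ≡ -a i` modulo `m i`, written without subtraction as `x + a i ≡ m i * a i`.
  have hxa : x + a i ≡ m i * a i [MOD m i] := by
    have := (hx i hi).add_right (a i)
    rwa [← Nat.succ_mul, Nat.sub_one, Nat.succ_pred_eq_of_pos (Nat.pos_of_ne_zero (hm i hi))]
      at this
  rw [add_right_comm]
  exact dvd_add ((hxa.dvd_iff dvd_rfl).2 (dvd_mul_right _ _))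
    ((Finset.dvd_prod_of_mem m hi).mul_left _)

lemma exists_gt_mem_NSet (S : Finset ℕ) (hS : ∀ p ∈ S, p.Prime) (n : ℕ) (s : ℕ → ℕ) (N : ℕ) :
    ∃ x : ℕ+, N < (x : ℕ) ∧ ∀ p ∈ S, x ∈ NSet p n (s p) := by
  obtain ⟨x, hNx, hx⟩ := exists_gt_forall_dvd_add S (m := fun p => p ^ n)
    (fun p hp => pow_ne_zero n (hS p hp).ne_zero)
    (fun p hp q hq hpq => ((Nat.coprime_primes (hS p hp) (hS q hq)).2 hpq).pow n n) s N
  exact ⟨⟨x, by omega⟩, hNx, fun p hp => mem_NSet_iff.2 (hx p hp)⟩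

theorem exists_nonprincipal_ultrafilter_charSum_NSet_mem (φ : ℕ → ℕ → ℕ) :
    ∃ U : Ultrafilter ℕ+, (∀ A : Set ℕ+, A.Finite → A ∉ U) ∧
      ∀ p n : ℕ, p.Prime → NSet p n (charSum φ p n) ∈ U := by
  choose b hbJ hb using fun J => exists_gt_mem_NSet ((Finset.range (J + 1)).filter Nat.Prime)
    (fun p hp => (Finset.mem_filter.1 hp).2) J (fun p => charSum φ p J) J
  set U := Ultrafilter.of (map b atTop)
  have hmem (A : Set ℕ+) (hA : ∀ᶠ J in atTop, b J ∈ A) : A ∈ U := Ultrafilter.of_le _ hA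
  refine ⟨U, fun A hA hAU => ?_, fun p n hp => hmem _ ?_⟩
  · obtain ⟨B, hB⟩ := hA.bddAbove
    have hAc : Aᶜ ∈ U := hmem _ <| (eventually_ge_atTop (B : ℕ)).mono fun J hJ hbA => by
      have : (b J : ℕ) ≤ B := PNat.coe_le_coe _ _ |>.2 (hB hbA)
      exact absurd (hbJ J) (by omega)
    exact U.compl_mem_iff_notMem.1 hAc hAU
  · filter_upwards [eventually_ge_atTop (max p n)] with J hJ
    exact NSet_charSum_subset (le_of_max_le_right hJ)
      (hb J p (Finset.mem_filter.2 ⟨Finset.mem_range.2 (by omega), hp⟩))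

/-- (1) Every ultrafilter on `ℕ∖{0}` contains the family of subsets `N_{p^n,φ_p}`
characteristic of exactly one family `(φ_p)_p` of maps `φ_p : ℕ∖{0} → {0,…,p-1}`.
(2) For every such family `(φ_p)_p` there is a non-principal ultrafilter on `ℕ∖{0}`
containing all the sets `N_{p^n,φ_p}`. -/
theorem ultrafilter_charSets :
    (∀ U : Ultrafilter ℕ+,
      (∃ φ : ℕ → ℕ → ℕ, (∀ p : ℕ, p.Prime → ∀ k : ℕ, 1 ≤ k → φ p k < p) ∧
        (∀ p n : ℕ, p.Prime → 1 ≤ n → NSet p n (charSum φ p n) ∈ U)) ∧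
      (∀ φ ψ : ℕ → ℕ → ℕ,
        (∀ p : ℕ, p.Prime → ∀ k : ℕ, 1 ≤ k → φ p k < p) →
        (∀ p n : ℕ, p.Prime → 1 ≤ n → NSet p n (charSum φ p n) ∈ U) →
        (∀ p : ℕ, p.Prime → ∀ k : ℕ, 1 ≤ k → ψ p k < p) →
        (∀ p n : ℕ, p.Prime → 1 ≤ n → NSet p n (charSum ψ p n) ∈ U) →
        ∀ p : ℕ, p.Prime → ∀ k : ℕ, 1 ≤ k → φ p k = ψ p k)) ∧
    (∀ φ : ℕ → ℕ → ℕ, (∀ p : ℕ, p.Prime → ∀ k : ℕ, 1 ≤ k → φ p k < p) →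
      ∃ U : Ultrafilter ℕ+, (∀ A : Set ℕ+, A.Finite → A ∉ U) ∧
        (∀ p n : ℕ, p.Prime → 1 ≤ n → NSet p n (charSum φ p n) ∈ U)) := by
  refine ⟨fun U => ⟨?_, ?_⟩, fun φ _ => ?_⟩
  · obtain ⟨φ, hφ, hφU⟩ := U.exists_charSum_NSet_mem
    exact ⟨φ, hφ, fun p n hp _ => hφU p n hp⟩
  · intro φ ψ hφ hφU hψ hψU p hp _ hk
    exact eq_of_charSum_NSet_mem hp.pos (hφ p hp) (hψ p hp) (hφU p · hp) (hψU p · hp) hk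
  · obtain ⟨U, hU, hφU⟩ := exists_nonprincipal_ultrafilter_charSum_NSet_mem φ
    exact ⟨U, hU, fun p n hp _ => hφU p n hp⟩
end

section
/- Let G be an infinite discrete c-regular cyclically ordered abelian group and p a prime. The following conditions are equivalent: (1) G is p-divisible; (2) the least positive element 1_G is divisible by p in G; (3) the unique k ∈ {0,…,p−1} for which D_{p,k} holds in G is nonzero; (4) G contains no element of order p. -/
section Discrete

variable {G : Type*}

/-- The linear order at `0` associated with the cyclic order `R`. -/
def cprec [AddCommGroup G] (R : G → G → G → Prop) (x y : G) : Prop :=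
  (x = 0 ∧ y ≠ 0) ∨ R 0 x y

/-- `(G, R)` is discrete, with least positive element `e`. -/
def IsDiscreteCyc [AddCommGroup G] (R : G → G → G → Prop) (e : G) : Prop :=
  e ≠ 0 ∧ ∀ x : G, x ≠ 0 → x = e ∨ cprec R e x

/-- The formula `D_{q,k}`: there is `x` with `R(0, x, 2x, …, (q-1)x)` and `q x = k e`. -/
def Dform [AddCommGroup G] (R : G → G → G → Prop) (e : G) (q k : ℕ) : Prop :=
  ∃ x : G, RChain R q (fun i => i • x) ∧ q • x = k • e

end Discrete

section Divisibility

variable {G : Type*} [AddCommGroup G]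

theorem exists_nsmul_eq_of_nsmul_eq_nsmul {p k : ℕ} (hkp : k.Coprime p) {x e : G}
    (hx : p • x = k • e) : ∃ y : G, p • y = e := by
  obtain ⟨a, b, hab⟩ := hkp.isCoprime
  refine ⟨a • x + b • e, ?_⟩
  calc p • (a • x + b • e) = a • (p • x) + (b * p) • e := by module
    _ = (a * k + b * p) • e := by rw [hx]; module
    _ = e := by rw [hab, one_zsmul]

theorem nsmul_notMem_zmultiples {p k j : ℕ} (hp : p.Prime) {x e : G}
    (he : ¬ IsOfFinAddOrder e) (hx : p • x = k • e) (hk : ¬ p ∣ k) (hj : ¬ p ∣ j) :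
    j • x ∉ AddSubgroup.zmultiples e := by
  rintro ⟨z, hz⟩
  have hpz : ((p : ℤ) * z) • e = ((j * k : ℕ) : ℤ) • e := by
    simp only at hz
    calc ((p : ℤ) * z) • e = j • (p • x) := by rw [mul_zsmul, hz]; module
      _ = _ := by rw [hx]; module
  have hdvd : (p : ℤ) ∣ ((j * k : ℕ) : ℤ) :=
    ⟨z, (injective_zsmul_iff_not_isOfFinAddOrder.mpr he hpz).symm⟩
  exact ((Nat.Prime.dvd_mul hp).mp (Int.natCast_dvd_natCast.mp hdvd)).elim hj hk

end Divisibility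

namespace IsCyclicOrder

variable {G : Type*} [AddCommGroup G] {R : G → G → G → Prop}

section Order

variable (h : IsCyclicOrder R)
include h

theorem left_ne_zero {x y : G} (hxy : R 0 x y) : x ≠ 0 :=
  fun hx => (h.strict _ _ _ hxy).1 hx.symm

theorem right_ne_zero {x y : G} (hxy : R 0 x y) : y ≠ 0 :=
  (h.strict _ _ _ hxy).2.2

theorem ne_of_rel_zero {x y : G} (hxy : R 0 x y) : x ≠ y :=
  (h.strict _ _ _ hxy).2.1

theorem irrefl_zero (x : G) : ¬ R 0 x x :=
  fun hx => h.ne_of_rel_zero hx rfl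

theorem trans_zero {x y z : G} (hxy : R 0 x y) (hyz : R 0 y z) : R 0 x z :=
  h.trans' 0 x y z hxy hyz

theorem asymm_zero {x y : G} (hxy : R 0 x y) : ¬ R 0 y x :=
  h.asymm 0 x y hxy

theorem total_zero {x y : G} (hx : x ≠ 0) (hy : y ≠ 0) (hxy : x ≠ y) : R 0 x y ∨ R 0 y x :=
  h.total 0 x y (Ne.symm hx) hxy hy

theorem translate {a b c : G} (d : G) (hr : R a b c) {a' b' c' : G}
    (ha : a + d = a') (hb : b + d = b') (hc : c + d = c') : R a' b' c' :=
  ha ▸ hb ▸ hc ▸ h.compat a b c d hr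

theorem rel_of_rel_zero_of_rel_zero {a b c : G} (hab : R 0 a b) (hbc : R 0 b c) : R a b c :=
  h.cyc _ _ _ (h.cyc _ _ _ (h.trans' b c 0 a (h.cyc _ _ _ hbc)
    (h.cyc _ _ _ (h.cyc _ _ _ hab))))

theorem rel_zero_of_rel_of_rel_zero {a b c : G} (hac : R 0 a c) (habc : R a b c) :
    R 0 a b ∧ R 0 b c :=
  ⟨h.cyc _ _ _ (h.cyc _ _ _ (h.trans' a b c 0 habc (h.cyc _ _ _ hac))),
    h.cyc _ _ _ (h.trans' c 0 a b (h.cyc _ _ _ (h.cyc _ _ _ hac))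
      (h.cyc _ _ _ (h.cyc _ _ _ habc)))⟩

theorem rel_zero_neg {x y : G} (hxy : R 0 x y) : R 0 (-y) (-x) := by
  have hx := h.left_ne_zero hxy
  have hy := h.right_ne_zero hxy
  rcases h.total_zero (neg_ne_zero.mpr hy) (neg_ne_zero.mpr hx)
    (fun hxy' => h.ne_of_rel_zero hxy (neg_injective hxy').symm) with hlt | hgt
  · exact hlt
  -- otherwise `x < y < y - x < -x < -y < x - y < x`
  have h₁ : R 0 y (y - x) :=
    h.cyc _ _ _ (h.cyc _ _ _ (h.translate y hgt (by abel) (by abel) (by abel)))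
  have h₂ : R 0 (y - x) (-x) := h.cyc _ _ _ (h.translate (-x) hxy (by abel) (by abel) (by abel))
  have h₃ : R 0 (-y) (x - y) :=
    h.cyc _ _ _ (h.cyc _ _ _ (h.translate (-y) hxy (by abel) (by abel) (by abel)))
  have h₄ : R 0 (x - y) x := h.cyc _ _ _ (h.translate x hgt (by abel) (by abel) (by abel))
  exact (h.irrefl_zero x <| h.trans_zero hxy <| h.trans_zero h₁ <| h.trans_zero h₂ <|
    h.trans_zero hgt <| h.trans_zero h₃ h₄).elim

theorem rel_zero_add_or_rel_zero_add {a b : G} (ha : a ≠ 0) (hb : b ≠ 0) (hab : a + b ≠ 0) :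
    R 0 a (a + b) ∨ R 0 (a + b) b := by
  by_contra! hcon
  have h₁ : R 0 (a + b) a :=
    (h.total_zero hab ha fun h' => hb (add_eq_left.mp h')).resolve_right hcon.1
  have h₂ : R 0 b (a + b) :=
    (h.total_zero hb hab fun h' => ha (add_eq_right.mp h'.symm)).resolve_right hcon.2
  have h₃ : R (-b) 0 a := h.translate (-b) h₂ (zero_add _) (add_neg_cancel b) (by abel)
  have h₄ : R (-a) b 0 := h.translate (-a) h₁ (zero_add _) (by abel) (add_neg_cancel a)
  exact h.asymm_zero (by simpa using h.rel_zero_neg (h.cyc _ _ _ h₃))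
    (h.cyc _ _ _ (h.cyc _ _ _ h₄))

theorem rel_zero_add_of_rel_zero_neg {a b : G} (hab : R 0 a (-b)) (hb : b ≠ 0) :
    R 0 a (a + b) := by
  refine (h.rel_zero_add_or_rel_zero_add (h.left_ne_zero hab) hb
    fun h0 => h.ne_of_rel_zero hab (eq_neg_of_add_eq_zero_left h0)).resolve_right fun hwrap => ?_
  have : R (-b) a 0 := h.translate (-b) hwrap (zero_add _) (by abel) (add_neg_cancel b)
  exact h.asymm_zero hab (h.cyc _ _ _ (h.cyc _ _ _ this))

theorem rel_zero_of_rel_zero_succ {y : ℕ → G} {a b : ℕ}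
    (hy : ∀ k, a ≤ k → k < b → R 0 (y k) (y (k + 1))) {i j : ℕ} (hai : a ≤ i) (hij : i < j)
    (hjb : j ≤ b) : R 0 (y i) (y j) := by
  induction j, hij using Nat.le_induction with
  | base => exact hy i hai hjb
  | succ j hij ih => exact h.trans_zero (ih (by omega)) (hy j (by omega) (by omega))

theorem rchain_iff {m : ℕ} {y : ℕ → G} (hy0 : y 0 = 0) :
    RChain R m y ↔ ∀ i, 1 ≤ i → i + 2 ≤ m → R 0 (y i) (y (i + 1)) := by
  constructor
  · intro hch
    have below_last : ∀ i, 1 ≤ i → i + 2 ≤ m → R 0 (y i) (y (m - 1)) := by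
      intro i hi1 him
      induction i, hi1 using Nat.le_induction with
      | base => simpa [hy0] using hch 0 (by omega)
      | succ i hi1 ih =>
        exact (h.rel_zero_of_rel_of_rel_zero (ih (by omega)) (hch i (by omega))).2
    intro i hi1 him
    rcases Nat.lt_or_ge (i + 2) m with hlt | hge
    · exact (h.rel_zero_of_rel_of_rel_zero (below_last i hi1 him) (hch i (by omega))).1
    · simpa [show m - 1 = i + 1 by omega] using below_last i hi1 him
  · intro hy i hi
    have hmono : ∀ i j, 1 ≤ i → i < j → j ≤ m - 1 → R 0 (y i) (y j) := fun i j =>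
      h.rel_zero_of_rel_zero_succ (fun k hk1 hk => hy k hk1 (by omega))
    rcases Nat.eq_zero_or_pos i with rfl | hi0
    · simpa [hy0] using hmono 1 (m - 1) le_rfl (by omega) le_rfl
    · exact h.rel_of_rel_zero_of_rel_zero (hmono i (i + 1) hi0 (by omega) (by omega))
        (hmono (i + 1) (m - 1) (by omega) (by omega) le_rfl)

theorem exists_minimal_of_finite {s : Set G} (hs : s.Finite) (hne : s.Nonempty) :
    ∃ m ∈ s, ∀ x ∈ s, ¬ R 0 x m := by
  have : IsStrictOrder G (R 0) := { irrefl := h.irrefl_zero, trans := fun _ _ _ => h.trans_zero }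
  obtain ⟨⟨m, hm⟩, -, hmin⟩ := (hs.wellFoundedOn (r := R 0)).has_min Set.univ
    (let ⟨x, hx⟩ := hne; ⟨⟨x, hx⟩, trivial⟩)
  exact ⟨m, hm, fun x hx => hmin ⟨x, hx⟩ trivial⟩

theorem nsmul_rel_zero_nsmul {δ u : G} {n : ℕ} (hδu : R 0 δ u)
    (hu : ∀ j, 1 ≤ j → j + 1 < n → R 0 (j • u) ((j + 1) • u)) :
    ∀ j, 1 ≤ j → j < n → R 0 (j • δ) (j • u) := by
  intro j hj1 hjn
  induction j, hj1 using Nat.le_induction with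
  | base => simpa using hδu
  | succ j hj1 ih =>
    have hδju : R 0 δ (j • u) := by
      rcases Nat.eq_or_lt_of_le hj1 with rfl | hj
      · simpa using hδu
      · have hu1j := h.rel_zero_of_rel_zero_succ (y := (· • u))
          (fun k hk1 hk => hu k hk1 (by omega)) le_rfl hj le_rfl
        exact h.trans_zero hδu (by simpa using hu1j)
    -- `j • u < j • u + δ < (j + 1) • u`, and `(j + 1) • δ` lies between `δ` and `j • u + δ`
    have hmid := h.rel_zero_of_rel_of_rel_zero (hu j hj1 (by omega))
      (h.translate (j • u) hδu (zero_add _) (add_comm _ _) (succ_nsmul' u j).symm)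
    have hδ := h.rel_zero_of_rel_of_rel_zero (h.trans_zero hδju hmid.1)
      (h.translate δ (ih (by omega)) (zero_add δ) (succ_nsmul δ j).symm rfl)
    exact h.trans_zero hδ.2 hmid.2

theorem exists_rel_zero_nsmul_succ_of_nsmul_eq_zero {p : ℕ} (hp : p.Prime) {w : G}
    (hw0 : w ≠ 0) (hpw : p • w = 0) :
    ∃ u : G, u ≠ 0 ∧ p • u = 0 ∧ ∀ j, 1 ≤ j → j + 1 < p → R 0 (j • u) ((j + 1) • u) := by
  have := Fact.mk hp
  have hfin : IsOfFinAddOrder w := isOfFinAddOrder_iff_nsmul_eq_zero.mpr ⟨p, hp.pos, hpw⟩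
  -- take `u` least among the nonzero multiples of `w`: its own multiples cannot lie below it
  obtain ⟨u, ⟨hu, hu0 : u ≠ 0⟩, hmin⟩ := h.exists_minimal_of_finite
    (hfin.finite_zmultiples.sdiff (t := {0})) ⟨w, AddSubgroup.mem_zmultiples w, hw0⟩
  have hpu : p • u = 0 := by
    obtain ⟨z, rfl⟩ := hu
    simp only [smul_comm p z w, hpw, smul_zero]
  have hne : ∀ j, 0 < j → j < p → j • u ≠ 0 := fun j hj hjp =>
    nsmul_ne_zero_of_lt_addOrderOf hj.ne' (addOrderOf_eq_prime hpu hu0 ▸ hjp)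
  refine ⟨u, hu0, hpu, fun j hj1 hjp => ?_⟩
  have hsucc : (j + 1) • u ≠ 0 := hne (j + 1) (by omega) hjp
  rw [succ_nsmul] at hsucc ⊢
  exact (h.rel_zero_add_or_rel_zero_add (hne j hj1 (by omega)) hu0 hsucc).resolve_right
    (hmin _ ⟨add_mem (nsmul_mem hu j) hu, hsucc⟩)

theorem exists_rel_zero_nsmul_eq {p : ℕ} {u y : G} (hu0 : u ≠ 0) (hpu : p • u = 0)
    (hpy : p • y ≠ 0) : ∃ δ : G, R 0 δ u ∧ p • δ = p • y := by
  have hp : 0 < p := Nat.pos_of_ne_zero fun hp0 => hpy (by rw [hp0, zero_nsmul])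
  have hfin : IsOfFinAddOrder u := isOfFinAddOrder_iff_nsmul_eq_zero.mpr ⟨p, hp, hpu⟩
  have hcoset : ∀ z ∈ AddSubgroup.zmultiples u, p • (y + z) = p • y := by
    rintro _ ⟨n, rfl⟩
    simp only [smul_add, smul_comm p n u, hpu, smul_zero, add_zero]
  -- take `δ` least in the coset `y + ⟨u⟩`; then `δ - u` cannot lie below `δ`
  obtain ⟨_, ⟨z, hz, rfl⟩, hmin⟩ := h.exists_minimal_of_finite
    (hfin.finite_zmultiples.image (y + ·)) ⟨y, 0, zero_mem _, add_zero y⟩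
  have hne : ∀ v : G, p • v = p • y → v ≠ 0 := fun v hv hv0 =>
    hpy (by rw [← hv, hv0, smul_zero])
  have hzu : z - u ∈ AddSubgroup.zmultiples u := sub_mem hz (AddSubgroup.mem_zmultiples u)
  have hsum : y + (z - u) + u = y + z := by abel
  have key := h.rel_zero_add_or_rel_zero_add (hne (y + (z - u)) (hcoset _ hzu)) hu0
    (hsum ▸ hne _ (hcoset z hz))
  rw [hsum] at key
  exact ⟨y + z, key.resolve_left (hmin _ ⟨z - u, hzu, rfl⟩), hcoset z hz⟩

end Order

section Discrete

variable {e : G} (h : IsCyclicOrder R) (hd : IsDiscreteCyc R e)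
include h hd

theorem not_rel_zero_e (x : G) : ¬ R 0 x e := by
  intro hx
  rcases hd.2 x (h.left_ne_zero hx) with rfl | ⟨he0, -⟩ | hex
  · exact h.ne_of_rel_zero hx rfl
  · exact hd.1 he0
  · exact h.asymm_zero hx hex

theorem not_rel_add_e (a x : G) : ¬ R a x (a + e) :=
  fun hx => h.not_rel_zero_e hd (x - a) (h.translate (-a) hx (by abel) (by abel) (by abel))

theorem rel_zero_add_e {a : G} (ha : a ≠ 0) (hae : a + e ≠ 0) : R 0 a (a + e) :=
  (h.rel_zero_add_or_rel_zero_add ha hd.1 hae).resolve_right (h.not_rel_zero_e hd _)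

theorem rel_zero_neg_e {w : G} (hw : w ≠ 0) (hwe : w ≠ -e) : R 0 w (-e) := by
  refine (h.total_zero hw (neg_ne_zero.mpr hd.1) hwe).resolve_right fun hew => ?_
  have : R e 0 (w + e) := h.translate e hew (zero_add e) (neg_add_cancel e) rfl
  exact h.not_rel_zero_e hd _ (h.cyc _ _ _ this)

theorem exists_eq_nsmul_of_rel_zero_nsmul {w : G} {N : ℕ} (hw : R 0 w (N • e)) :
    ∃ i, 0 < i ∧ i < N ∧ w = i • e := by
  induction N with
  | zero => exact absurd (zero_nsmul e) (h.right_ne_zero hw)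
  | succ M ih =>
    by_cases hwM : w = M • e
    · rcases Nat.eq_zero_or_pos M with rfl | hM
      · exact absurd hwM (by simpa using h.left_ne_zero hw)
      · exact ⟨M, hM, M.lt_succ_self, hwM⟩
    by_cases hM0 : M • e = 0
    · rw [succ_nsmul, hM0, zero_add] at hw
      exact absurd hw (h.not_rel_zero_e hd w)
    rcases h.total_zero (h.left_ne_zero hw) hM0 hwM with hlt | hgt
    · obtain ⟨i, hi0, hiM, rfl⟩ := ih hlt
      exact ⟨i, hi0, by omega, rfl⟩
    · exact absurd (by simpa [succ_nsmul] using h.rel_of_rel_zero_of_rel_zero hgt hw)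
        (h.not_rel_add_e hd (M • e) w)

theorem exists_eq_add_nsmul_of_rel {a w : G} {N : ℕ} (hw : R a w (a + N • e)) :
    ∃ i, 0 < i ∧ i < N ∧ w = a + i • e := by
  obtain ⟨i, hi0, hiN, hi⟩ := h.exists_eq_nsmul_of_rel_zero_nsmul hd
    (h.translate (-a) hw (add_neg_cancel a) rfl (by abel))
  exact ⟨i, hi0, hiN, by rw [← hi]; abel⟩

theorem not_isOfFinAddOrder [Infinite G] : ¬ IsOfFinAddOrder e := by
  intro hfin
  set n := addOrderOf e
  have hn : n ≠ 0 := hfin.addOrderOf_pos.ne'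
  have hneg : (n - 1) • e = -e := by
    rw [eq_neg_iff_add_eq_zero, ← succ_nsmul, Nat.sub_add_cancel (by omega),
      addOrderOf_nsmul_eq_zero]
  -- every element is a multiple of `e`, since everything lies below `-e = (n - 1) • e`
  have hall : ∀ w : G, w ∈ AddSubgroup.zmultiples e := by
    intro w
    by_cases hw : w = 0
    · exact hw ▸ zero_mem _
    by_cases hwe : w = -e
    · exact hwe ▸ neg_mem (AddSubgroup.mem_zmultiples e)
    obtain ⟨i, -, -, rfl⟩ := h.exists_eq_nsmul_of_rel_zero_nsmul hd
      (hneg ▸ h.rel_zero_neg_e hd hw hwe)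
    exact nsmul_mem (AddSubgroup.mem_zmultiples e) i
  exact Set.infinite_univ (hfin.finite_zmultiples.subset fun w _ => hall w)

theorem rchain_add_nsmul_e {b : G} {n : ℕ} (hb : ∀ i, 1 ≤ i → i ≤ n → b + i • e ≠ 0) :
    RChain R (n + 1) (fun i => if i = 0 then 0 else b + i • e) := by
  refine (h.rchain_iff (by simp)).mpr fun i hi1 hin => ?_
  simp only [Nat.pos_iff_ne_zero.mp hi1, Nat.succ_ne_zero, if_false, succ_nsmul, ← add_assoc]
  have hnext := hb (i + 1) (by omega) (by omega)
  exact h.rel_zero_add_e hd (hb i hi1 (by omega)) (by simpa [succ_nsmul, add_assoc] using hnext)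

theorem exists_nsmul_eq_add_nsmul_e {n : ℕ} (hreg : CNRegular R n) (hn : n ≠ 0) {b : G}
    (hb : ∀ i, 1 ≤ i → i ≤ n → b + i • e ≠ 0) :
    ∃ g : G, ∃ j, 0 < j ∧ j ≤ n ∧ n • g = b + j • e ∧
      RChain R (n + 1) (fun i => if i = n then b + n • e else i • g) := by
  obtain ⟨g, hwin, hch⟩ := hreg (fun i => b + i • e) (h.rchain_add_nsmul_e hd hb)
  refine ⟨g, ?_⟩
  rcases hwin with hg | hg | hg
  · exact ⟨1, one_pos, by omega, hg, hch⟩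
  · exact ⟨n, by omega, le_rfl, hg, hch⟩
  · have hlast : b + n • e = b + 1 • e + (n - 1) • e := by
      rw [add_assoc, ← add_nsmul, Nat.add_sub_cancel' (by omega)]
    obtain ⟨i, hi0, hin, hi⟩ := h.exists_eq_add_nsmul_of_rel hd (hlast ▸ hg)
    exact ⟨1 + i, by omega, by omega, by rw [hi, add_assoc, add_nsmul], hch⟩

theorem rel_zero_add_nsmul_e {a : G} (ha : a ∉ AddSubgroup.zmultiples e) {N : ℕ} (hN : N ≠ 0) :
    R 0 a (a + N • e) := by
  have hne : ∀ i : ℕ, a + i • e ≠ 0 := fun i hi => ha <| eq_neg_of_add_eq_zero_left hi ▸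
    neg_mem (nsmul_mem (AddSubgroup.mem_zmultiples e) i)
  have hstep : ∀ k : ℕ, R 0 (a + k • e) (a + (k + 1) • e) := fun k => by
    rw [succ_nsmul, ← add_assoc]
    exact h.rel_zero_add_e hd (hne k) (by simpa [succ_nsmul, add_assoc] using hne (k + 1))
  simpa using h.rel_zero_of_rel_zero_succ (y := fun i : ℕ => a + i • e) (a := 0) (b := N)
    (fun k _ _ => hstep k) le_rfl (Nat.pos_of_ne_zero hN) le_rfl

theorem rchain_nsmul_add_e {g : G} {n : ℕ}
    (hg : ∀ j, 1 ≤ j → j + 1 < n → R 0 (j • g) ((j + 1) • g))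
    (hgz : ∀ j, 1 ≤ j → j < n → j • g ∉ AddSubgroup.zmultiples e) :
    RChain R n (fun i => i • (g + e)) := by
  refine (h.rchain_iff (zero_nsmul _)).mpr fun j hj1 hjn => ?_
  have hjg := hgz j hj1 (by omega)
  have hj1g := hgz (j + 1) (by omega) (by omega)
  have hg1 : g ∉ AddSubgroup.zmultiples e := by simpa using hgz 1 le_rfl (by omega)
  have hinter : R 0 (j • g + j • e) ((j + 1) • g) := by
    refine (h.total_zero (h.right_ne_zero (h.rel_zero_add_nsmul_e hd hjg (by omega)))
      (fun h0 => hj1g (by rw [h0]; exact zero_mem _)) fun heq => hg1 ?_).resolve_right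
      fun hgt => ?_
    · rw [succ_nsmul, add_left_cancel_iff] at heq
      exact heq ▸ nsmul_mem (AddSubgroup.mem_zmultiples e) j
    · have hgje : R 0 g (j • e) := h.translate (-(j • g))
        (h.rel_of_rel_zero_of_rel_zero (hg j hj1 (by omega)) hgt) (by abel)
        (by rw [succ_nsmul]; abel) (by abel)
      obtain ⟨i, -, -, rfl⟩ := h.exists_eq_nsmul_of_rel_zero_nsmul hd hgje
      exact hg1 (nsmul_mem (AddSubgroup.mem_zmultiples e) i)
  have hup := h.rel_zero_add_nsmul_e hd hj1g (Nat.succ_ne_zero j)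
  simp only [smul_add] at hup ⊢
  exact h.trans_zero hinter hup

theorem exists_eq_nsmul_add_nsmul_e {n : ℕ} (hreg : CNRegular R n) (hn : n ≠ 0) (x : G) :
    ∃ g : G, ∃ m : ℕ, x = n • g + m • e := by
  by_cases hb : ∀ i, 1 ≤ i → i ≤ n → (x - n • e) + i • e ≠ 0
  · obtain ⟨g, j, -, hjn, hg, -⟩ := h.exists_nsmul_eq_add_nsmul_e hd hreg hn hb
    refine ⟨g, n - j, ?_⟩
    rw [hg, add_assoc, ← add_nsmul, Nat.add_sub_cancel' hjn]
    abel
  · push Not at hb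
    obtain ⟨i, -, hin, hi⟩ := hb
    refine ⟨0, n - i, ?_⟩
    rw [smul_zero, zero_add, ← sub_eq_zero, ← hi, sub_nsmul _ hin]
    abel

theorem eq_zero_of_nsmul_eq_zero {p : ℕ} (hp : p.Prime) {y w : G} (hy : p • y = e)
    (hw : p • w = 0) : w = 0 := by
  by_contra hw0
  obtain ⟨u, hu0, hpu, hu⟩ := h.exists_rel_zero_nsmul_succ_of_nsmul_eq_zero hp hw0 hw
  obtain ⟨δ, hδu, hδ⟩ := h.exists_rel_zero_nsmul_eq hu0 hpu (hy ▸ hd.1)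
  obtain ⟨q, rfl⟩ : ∃ q, p = q + 1 := ⟨p - 1, by have := hp.pos; omega⟩
  have hq : 1 ≤ q := by have := hp.two_le; omega
  have hqu : q • u = -u := eq_neg_of_add_eq_zero_left (by rwa [← succ_nsmul])
  have hqδ : R 0 (q • δ) (-δ) :=
    h.trans_zero (hqu ▸ h.nsmul_rel_zero_nsmul hδu hu q hq q.lt_succ_self) (h.rel_zero_neg hδu)
  have hlt := h.rel_zero_add_of_rel_zero_neg hqδ (h.left_ne_zero hδu)
  rw [← succ_nsmul, hδ, hy] at hlt
  exact h.not_rel_zero_e hd _ hlt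

theorem exists_dform_of_forall_nsmul_eq_zero {p : ℕ} (hp : p.Prime) [Infinite G]
    (hreg : CNRegular R p) (htf : ∀ g : G, p • g = 0 → g = 0) :
    ∃ k, k < p ∧ k ≠ 0 ∧ Dform R e p k := by
  have he := h.not_isOfFinAddOrder hd
  have hb : ∀ i, 1 ≤ i → i ≤ p → -((p + 1) • e) + i • e ≠ 0 := fun i _ hip h0 =>
    he <| isOfFinAddOrder_iff_nsmul_eq_zero.mpr ⟨p + 1 - i, by omega,
      add_right_cancel (b := i • e) <| by
        rw [← add_nsmul, Nat.sub_add_cancel (by omega), zero_add, ← neg_add_eq_zero, h0]⟩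
  obtain ⟨g, j, hj0, hjp, hpg, hch⟩ := h.exists_nsmul_eq_add_nsmul_e hd hreg hp.ne_zero hb
  obtain ⟨k, rfl⟩ : ∃ k, j = k + 1 := ⟨j - 1, by omega⟩
  have hpx : p • (g + e) = k • e := by
    rw [smul_add, hpg, succ_nsmul, succ_nsmul]
    abel
  have hlast : -((p + 1) • e) + p • e = -e := by
    rw [succ_nsmul]
    abel
  have hge : R 0 g (-e) := by
    simpa [hp.ne_zero.symm, hp.one_lt.ne, hlast] using hch 0 (by have := hp.two_le; omega)
  have hk0 : k ≠ 0 := by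
    rintro rfl
    exact h.ne_of_rel_zero hge (eq_neg_of_add_eq_zero_left (htf _ (by simpa using hpx)))
  refine ⟨k, by omega, hk0, g + e, h.rchain_nsmul_add_e hd (fun i hi1 hip => ?_)
    (fun i hi1 hip hmem => ?_), hpx⟩
  · have hgi := (h.rchain_iff (by simp [hp.ne_zero.symm])).mp hch i hi1 (by omega)
    rwa [if_neg (by omega), if_neg (by omega)] at hgi
  · refine nsmul_notMem_zmultiples hp he hpx (Nat.not_dvd_of_pos_of_lt (by omega) (by omega))
      (Nat.not_dvd_of_pos_of_lt hi1 hip) ?_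
    rw [smul_add]
    exact add_mem hmem (nsmul_mem (AddSubgroup.mem_zmultiples e) i)

end Discrete

end IsCyclicOrder

/-- For an infinite discrete c-regular cyclically ordered abelian group `G` and a
prime `p`, the following are equivalent: (1) `G` is `p`-divisible; (2) `1_G` is
`p`-divisible; (3) the unique `k < p` for which `D_{p,k}` holds is nonzero;
(4) `G` has no element of order `p`. -/
theorem discrete_cregular_pdivisible_tfae (G : Type*) [AddCommGroup G]
    (R : G → G → G → Prop) (h : IsCyclicOrder R) (e : G) (hd : IsDiscreteCyc R e)
    (hc : ∀ n : ℕ, 2 ≤ n → CNRegular R n) (hinf : Infinite G)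
    (p : ℕ) (hp : p.Prime) :
    List.TFAE
      [ ∀ x : G, ∃ y : G, p • y = x,
        ∃ y : G, p • y = e,
        ∃ k : ℕ, k < p ∧ k ≠ 0 ∧ Dform R e p k,
        ¬ ∃ g : G, g ≠ 0 ∧ p • g = 0 ] := by
  have hreg := hc p hp.two_le
  tfae_have 1 → 2 := fun hdiv => hdiv e
  tfae_have 2 → 1 := fun ⟨y, hy⟩ x => by
    obtain ⟨g, m, rfl⟩ := h.exists_eq_nsmul_add_nsmul_e hd hreg hp.ne_zero x
    exact ⟨g + m • y, by rw [smul_add, smul_comm, hy]⟩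
  tfae_have 2 → 4 := fun ⟨y, hy⟩ ⟨w, hw0, hw⟩ => hw0 (h.eq_zero_of_nsmul_eq_zero hd hp hy hw)
  tfae_have 4 → 3 := fun htf =>
    h.exists_dform_of_forall_nsmul_eq_zero hd hp hreg fun g hg =>
      by_contra fun hg0 => htf ⟨g, hg0, hg⟩
  tfae_have 3 → 2 := fun ⟨k, hkp, hk0, _, _, hx⟩ =>
    exists_nsmul_eq_of_nsmul_eq_nsmul
      (hp.coprime_iff_not_dvd.mpr (Nat.not_dvd_of_pos_of_lt (Nat.pos_of_ne_zero hk0) hkp)).symm hx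
  tfae_finish
end
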